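/- arXiv:2412.18033 — 11 statements merged into one kernel-verified Lean document; each statement's English description precedes it below -/
import Mathlib

section
/- Let I be a finite nonempty set of loads with power demands ℓ_i > 0 and criticality values C_i ∈ [0,1], partitioned into n regions L_1, …, L_n. Let P ∈ ℝ with 0 < P ≤ ∑_{i∈I} ℓ_i, let z* be an optimal threshold and suppose f(z*) > P. Let c > 0 satisfy the gap condition and let ẑ ∈ ℝ satisfy f̂(ẑ) = P. Let E : ℕ → (symmetric edge sets on {1,…,n}) be a time-varying communication network for which there exists B ∈ ℕ, B > 0, such that for every t ∈ ℕ the undirected graph on {1,…,n} with edge set ∪_{τ=tB+1}^{(t+1)B} E(τ) is connected. Then there exist a sequence of n×n doubly stochastic matrices W(t) satisfying W(t)_{kj} = 0 whenever k ≠ j and (j,k) ∉ E(t), and a step-size sequence η(t) ≥ 0 with ∑_t η(t) = ∞ and ∑_t η(t)² < ∞, such that: for every θ > 0, every collection of bounded sequences p_j : ℕ → ℝ (j = 1,…,n) satisfying |∑_{j=1}^n p_j(t) − P| ≤ θ η(t) for all t, and every initial condition x(0) ∈ ℝⁿ, the iterates x(t+1) = W(t) x(t) − η(t)(g(t) − p(t)),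 where g_j(t) = f̂_j(x_j(t)) and f̂_j(z) = ∑_{i∈L_j} ℓ_i w_c(z − C_i), satisfy: there exists T ∈ ℕ such that for all t ≥ T and every j ∈ {1,…,n}, the set {i ∈ L_j : C_i ≥ x_j(t)} equals {i ∈ L_j : C_i ≥ ẑ}; in particular ζ_j(t) = min{C_i : i ∈ L_j, C_i ≥ x_j(t)} converges in finite time to min{C_i : i ∈ L_j, C_i ≥ ẑ} whenever this set is nonempty. -/
/-- Ramp function `w_c`: `1` for `z ≥ 0`, `z/c + 1` for `-c ≤ z < 0`, `0` for `z < -c`. -/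
noncomputable def rampW (c z : ℝ) : ℝ :=
  if 0 ≤ z then 1 else if -c ≤ z then z / c + 1 else 0

/-- The cumulative criticality function `f(z) = ∑_{i : C i ≤ z} ℓ i`. -/
noncomputable def ccf {I : Type*} [Fintype I] (ℓ C : I → ℝ) (z : ℝ) : ℝ :=
  ∑ i ∈ Finset.univ.filter (fun i => C i ≤ z), ℓ i

/-- The Lipschitz surrogate CCF `f̂(z) = ∑_i ℓ i · w_c (z - C i)`. -/
noncomputable def sccf {I : Type*} [Fintype I] (ℓ C : I → ℝ) (c z : ℝ) : ℝ :=
  ∑ i, ℓ i * rampW c (z - C i)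

/-- The gap condition on `c`: criticality values that differ, differ by at least `c`. -/
def GapCond {I : Type*} (C : I → ℝ) (c : ℝ) : Prop :=
  ∀ i j : I, C j < C i → c ≤ C i - C j

/-- `z` is an optimal threshold for `P`: `f(z) ≥ P` and `f(z') < P` for all `z' < z`. -/
def OptThresh {I : Type*} [Fintype I] (ℓ C : I → ℝ) (P z : ℝ) : Prop :=
  P ≤ ccf ℓ C z ∧ ∀ z' < z, ccf ℓ C z' < P

open Filter

lemma rampW_eq (c : ℝ) (hc : 0 < c) (z : ℝ) :
    rampW c z = max 0 (min 1 (z / c + 1)) := by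
  unfold rampW
  rcases le_or_gt 0 z with h | h
  · rw [if_pos h]
    have h1 : (1:ℝ) ≤ z / c + 1 := by
      have := div_nonneg h hc.le; linarith
    rw [min_eq_left h1, max_eq_right zero_le_one]
  · rw [if_neg (not_le.mpr h)]
    rcases le_or_gt (-c) z with h2 | h2
    · rw [if_pos h2]
      have h3 : z / c + 1 ≤ 1 := by
        have : z / c ≤ 0 := div_nonpos_of_nonpos_of_nonneg h.le hc.le
        linarith
      have h4 : 0 ≤ z / c + 1 := by
        have : -1 ≤ z / c := by
          rw [le_div_iff₀ hc]; linarith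
        linarith
      rw [min_eq_right h3, max_eq_right h4]
    · rw [if_neg (not_le.mpr h2)]
      have h3 : z / c + 1 ≤ 0 := by
        have : z / c ≤ -1 := by
          rw [div_le_iff₀ hc]; linarith
        linarith
      have := min_le_right (1:ℝ) (z / c + 1)
      rw [max_eq_left (le_trans (min_le_right _ _) h3)]

lemma rampW_nonneg (c z : ℝ) (hc : 0 < c) : 0 ≤ rampW c z := by
  rw [rampW_eq c hc]; exact le_max_left _ _

lemma rampW_le_one (c z : ℝ) (hc : 0 < c) : rampW c z ≤ 1 := by
  rw [rampW_eq c hc]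
  exact max_le zero_le_one (min_le_left _ _)

lemma rampW_mono (c : ℝ) (hc : 0 < c) : Monotone (rampW c) := by
  intro a b hab
  rw [rampW_eq c hc, rampW_eq c hc]
  have : a / c ≤ b / c := by gcongr
  exact max_le_max le_rfl (min_le_min le_rfl (by linarith))

lemma rampW_lipschitz (c : ℝ) (hc : 0 < c) (a b : ℝ) :
    |rampW c a - rampW c b| ≤ |a - b| / c := by
  rw [rampW_eq c hc, rampW_eq c hc]
  have h1 : |max 0 (min 1 (a / c + 1)) - max 0 (min 1 (b / c + 1))| ≤
      |min 1 (a / c + 1) - min 1 (b / c + 1)| := by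
    rw [max_comm 0 _, max_comm 0 _]; exact abs_max_sub_max_le_abs _ _ _
  have h2 : |min 1 (a / c + 1) - min 1 (b / c + 1)| ≤ |(a / c + 1) - (b / c + 1)| := by
    have := abs_min_sub_min_le_max (1:ℝ) (a / c + 1) 1 (b / c + 1)
    simpa using this
  have h3 : |(a / c + 1) - (b / c + 1)| = |a - b| / c := by
    rw [show (a / c + 1) - (b / c + 1) = (a - b) / c by ring, abs_div, abs_of_pos hc]
  calc |max 0 (min 1 (a / c + 1)) - max 0 (min 1 (b / c + 1))| ≤ _ := h1
    _ ≤ _ := h2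
    _ = _ := h3

lemma rampW_ramp (c z : ℝ) (hc : 0 < c) (h1 : -c ≤ z) (h2 : z ≤ 0) :
    rampW c z = z / c + 1 := by
  unfold rampW
  rcases eq_or_lt_of_le h2 with h | h
  · subst h
    rw [if_pos le_rfl]
    field_simp
    ring
  · rw [if_neg (not_le.mpr h), if_pos h1]

lemma rampW_zero_of_le (c z : ℝ) (h : z ≤ -c) (hc : 0 < c) : rampW c z = 0 := by
  rw [rampW_eq c hc]
  have : z / c + 1 ≤ 0 := by
    have : z / c ≤ -1 := by rw [div_le_iff₀ hc]; linarith
    linarith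
  rw [max_eq_left (le_trans (min_le_right _ _) this)]

lemma rampW_one_of_nonneg (c z : ℝ) (h : 0 ≤ z) : rampW c z = 1 := by
  unfold rampW; rw [if_pos h]

section B
variable {I : Type*} [Fintype I] (ℓ C : I → ℝ) (c : ℝ) (hc : 0 < c)
  (hℓ : ∀ i, 0 < ℓ i)

include hc hℓ

lemma sccf_mono {a b : ℝ} (hab : a ≤ b) : sccf ℓ C c a ≤ sccf ℓ C c b := by
  apply Finset.sum_le_sum
  intro i _
  exact mul_le_mul_of_nonneg_left (rampW_mono c hc (by linarith)) (hℓ i).le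

lemma sccf_lipschitz (S : Finset I) (a b : ℝ) :
    |∑ i ∈ S, ℓ i * rampW c (a - C i) - ∑ i ∈ S, ℓ i * rampW c (b - C i)|
      ≤ (∑ i ∈ S, ℓ i) * |a - b| / c := by
  rw [← Finset.sum_sub_distrib]
  calc |∑ i ∈ S, (ℓ i * rampW c (a - C i) - ℓ i * rampW c (b - C i))|
      ≤ ∑ i ∈ S, |ℓ i * rampW c (a - C i) - ℓ i * rampW c (b - C i)| :=
        Finset.abs_sum_le_sum_abs _ _
    _ ≤ ∑ i ∈ S, ℓ i * (|a - b| / c) := by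
        apply Finset.sum_le_sum
        intro i _
        rw [← mul_sub, abs_mul, abs_of_pos (hℓ i)]
        apply mul_le_mul_of_nonneg_left _ (hℓ i).le
        have := rampW_lipschitz c hc (a - C i) (b - C i)
        simpa [sub_sub_sub_cancel_right] using this
    _ = (∑ i ∈ S, ℓ i) * |a - b| / c := by rw [← Finset.sum_mul, mul_div_assoc]

-- nonneg and upper bound of regional surrogate
lemma reg_sccf_nonneg (S : Finset I) (z : ℝ) :
    0 ≤ ∑ i ∈ S, ℓ i * rampW c (z - C i) :=
  Finset.sum_nonneg fun i _ => mul_nonneg (hℓ i).le (rampW_nonneg c _ hc)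

lemma reg_sccf_le (S : Finset I) (z : ℝ) :
    ∑ i ∈ S, ℓ i * rampW c (z - C i) ≤ ∑ i ∈ S, ℓ i := by
  apply Finset.sum_le_sum
  intro i _
  nth_rewrite 2 [← mul_one (ℓ i)]
  exact mul_le_mul_of_nonneg_left (rampW_le_one c _ hc) (hℓ i).le

end B

section C
variable {I : Type*} [Fintype I] {ℓ C : I → ℝ} {c P zstar : ℝ} (hc : 0 < c)
  (hℓ : ∀ i, 0 < ℓ i) (hP0 : 0 < P)
  (hopt2 : ∀ z' < zstar, ccf ℓ C z' < P) (hstrict : P < ccf ℓ C zstar)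

include hc hℓ hP0 hopt2 hstrict

lemma exists_crit_eq : ∃ i0, C i0 = zstar := by
  by_contra h
  push_neg at h
  set s := Finset.univ.filter (fun i => C i ≤ zstar) with hs
  have hlt : ∀ i ∈ s, C i < zstar := by
    intro i hi
    rw [hs, Finset.mem_filter] at hi
    exact lt_of_le_of_ne hi.2 (h i)
  have hsne : s.Nonempty := by
    by_contra hne
    rw [Finset.not_nonempty_iff_eq_empty] at hne
    have : ccf ℓ C zstar = 0 := by rw [ccf, ← hs, hne, Finset.sum_empty]
    linarith
  set z'' := s.sup' hsne C with hz''
  have hz''lt : z'' < zstar := by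
    rw [hz'', Finset.sup'_lt_iff]
    exact hlt
  have heq : ccf ℓ C z'' = ccf ℓ C zstar := by
    unfold ccf
    congr 1
    ext i
    simp only [Finset.mem_filter, Finset.mem_univ, true_and]
    constructor
    · intro hi; linarith
    · intro hi
      exact Finset.le_sup' C (by rw [hs]; simp [hi])
  have := hopt2 z'' hz''lt
  linarith

lemma sccf_ge_of_ge {z : ℝ} (hz : zstar ≤ z) : ccf ℓ C zstar ≤ sccf ℓ C c z := by
  unfold ccf sccf
  calc ∑ i ∈ Finset.univ.filter (fun i => C i ≤ zstar), ℓ i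
      = ∑ i ∈ Finset.univ.filter (fun i => C i ≤ zstar), ℓ i * rampW c (z - C i) := by
        apply Finset.sum_congr rfl
        intro i hi
        rw [Finset.mem_filter] at hi
        rw [rampW_one_of_nonneg c _ (by linarith [hi.2]), mul_one]
    _ ≤ ∑ i, ℓ i * rampW c (z - C i) := by
        apply Finset.sum_le_sum_of_subset_of_nonneg (Finset.filter_subset _ _)
        intro i _ _
        exact mul_nonneg (hℓ i).le (rampW_nonneg c _ hc)

lemma sccf_lt_of_le {z : ℝ} (hz : z ≤ zstar - c) : sccf ℓ C c z < P := by
  set A := Finset.univ.filter (fun i => C i < zstar) with hA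
  have hub : sccf ℓ C c z ≤ ∑ i ∈ A, ℓ i := by
    unfold sccf
    rw [← Finset.sum_filter_add_sum_filter_not Finset.univ (fun i => C i < zstar)]
    have h2 : ∑ i ∈ Finset.univ.filter (fun i => ¬ C i < zstar), ℓ i * rampW c (z - C i) = 0 := by
      apply Finset.sum_eq_zero
      intro i hi
      rw [Finset.mem_filter] at hi
      have : z - C i ≤ -c := by push_neg at hi; linarith [hi.2]
      rw [rampW_zero_of_le c _ this hc, mul_zero]
    rw [h2, add_zero, ← hA]
    apply Finset.sum_le_sum
    intro i _
    nth_rewrite 2 [← mul_one (ℓ i)]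
    exact mul_le_mul_of_nonneg_left (rampW_le_one c _ hc) (hℓ i).le
  rcases Finset.eq_empty_or_nonempty A with hAe | hAne
  · rw [hAe, Finset.sum_empty] at hub; linarith
  · set z'' := A.sup' hAne C with hz''
    have hz''lt : z'' < zstar := by
      rw [hz'', Finset.sup'_lt_iff]
      intro i hi; rw [hA, Finset.mem_filter] at hi; exact hi.2
    have heq : ∑ i ∈ A, ℓ i = ccf ℓ C z'' := by
      unfold ccf
      congr 1
      ext i
      simp only [hA, Finset.mem_filter, Finset.mem_univ, true_and]
      constructor
      · intro hi
        exact Finset.le_sup' C (by rw [hA]; simp [hi])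
      · intro hi; linarith
    have := hopt2 z'' hz''lt
    linarith

lemma zhat_bounds {zhat : ℝ} (hzhat : sccf ℓ C c zhat = P) :
    zstar - c < zhat ∧ zhat < zstar := by
  constructor
  · by_contra h
    push_neg at h
    have := sccf_lt_of_le hc hℓ hP0 hopt2 hstrict h
    linarith
  · by_contra h
    push_neg at h
    have := sccf_ge_of_ge hc hℓ hP0 hopt2 hstrict h
    linarith

lemma sccf_slope {i0 : I} (hi0 : C i0 = zstar) {a b : ℝ}
    (ha : zstar - c ≤ a) (hab : a ≤ b) (hb : b ≤ zstar) :
    ℓ i0 * ((b - a) / c) ≤ sccf ℓ C c b - sccf ℓ C c a := by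
  unfold sccf
  rw [← Finset.sum_sub_distrib]
  have key : ℓ i0 * ((b - a) / c) = ℓ i0 * rampW c (b - C i0) - ℓ i0 * rampW c (a - C i0) := by
    rw [hi0, rampW_ramp c _ hc (by linarith) (by linarith),
        rampW_ramp c _ hc (by linarith) (by linarith)]
    ring
  rw [key]
  rw [show ℓ i0 * rampW c (b - C i0) - ℓ i0 * rampW c (a - C i0)
      = (fun i => ℓ i * rampW c (b - C i) - ℓ i * rampW c (a - C i)) i0 from rfl]
  apply Finset.single_le_sum _ (Finset.mem_univ i0)
  intro i _
  have := rampW_mono c hc (show a - C i ≤ b - C i by linarith)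
  nlinarith [(hℓ i).le]

end C


open Finset

lemma walk_cross {V : Type*} (G : SimpleGraph V) (S : Set V) :
    ∀ {a b : V} (_ : G.Walk a b), a ∈ S → b ∉ S →
      ∃ u ∈ S, ∃ v, v ∉ S ∧ G.Adj u v := by
  intro a b w
  induction w with
  | nil => intro h1 h2; exact absurd h1 h2
  | @cons x y z h p ih =>
    intro h1 h2
    by_cases hm : y ∈ S
    · exact ih hm h2
    · exact ⟨x, h1, y, hm, h⟩

lemma exists_crossing {V : Type*} [Fintype V] (G : SimpleGraph V) (hG : G.Connected)
    (S : Finset V) (hS : S.Nonempty) (hSne : S ≠ Finset.univ) :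
    ∃ u ∈ S, ∃ v, v ∉ S ∧ G.Adj u v := by
  obtain ⟨a, ha⟩ := hS
  obtain ⟨b, hb⟩ : ∃ b, b ∉ S := by
    by_contra h
    push_neg at h
    exact hSne (Finset.eq_univ_iff_forall.mpr h)
  obtain ⟨w⟩ := hG.preconnected a b
  exact walk_cross G (↑S) w ha hb

section Mat
variable {n : ℕ}

def RowStoch (A : Matrix (Fin n) (Fin n) ℝ) : Prop :=
  (∀ j k, 0 ≤ A j k) ∧ ∀ j, ∑ k, A j k = 1

lemma RowStoch.one : RowStoch (1 : Matrix (Fin n) (Fin n) ℝ) := by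
  constructor
  · intro j k
    by_cases h : j = k <;> simp [Matrix.one_apply, h]
  · intro j
    simp [Matrix.one_apply]

lemma RowStoch.mul {A B : Matrix (Fin n) (Fin n) ℝ} (hA : RowStoch A) (hB : RowStoch B) :
    RowStoch (A * B) := by
  constructor
  · intro j k
    rw [Matrix.mul_apply]
    exact Finset.sum_nonneg fun l _ => mul_nonneg (hA.1 j l) (hB.1 l k)
  · intro j
    simp only [Matrix.mul_apply]
    rw [Finset.sum_comm]
    calc ∑ l, ∑ k, A j l * B l k = ∑ l, A j l * ∑ k, B l k := by
          simp [Finset.mul_sum]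
      _ = 1 := by simp only [hB.2]; simpa using hA.2 j

lemma mulVec_le_sup {A : Matrix (Fin n) (Fin n) ℝ} (hA : RowStoch A)
    (hne : (Finset.univ : Finset (Fin n)).Nonempty) (x : Fin n → ℝ) (j : Fin n) :
    A.mulVec x j ≤ Finset.univ.sup' hne x := by
  unfold Matrix.mulVec
  calc ∑ k, A j k * x k ≤ ∑ k, A j k * Finset.univ.sup' hne x := by
        apply Finset.sum_le_sum
        intro k _
        exact mul_le_mul_of_nonneg_left (Finset.le_sup' x (Finset.mem_univ k)) (hA.1 j k)
    _ = Finset.univ.sup' hne x := by rw [← Finset.sum_mul, hA.2 j, one_mul]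

lemma inf_le_mulVec {A : Matrix (Fin n) (Fin n) ℝ} (hA : RowStoch A)
    (hne : (Finset.univ : Finset (Fin n)).Nonempty) (x : Fin n → ℝ) (j : Fin n) :
    Finset.univ.inf' hne x ≤ A.mulVec x j := by
  unfold Matrix.mulVec
  calc Finset.univ.inf' hne x = ∑ k, A j k * Finset.univ.inf' hne x := by
        rw [← Finset.sum_mul, hA.2 j, one_mul]
    _ ≤ ∑ k, A j k * x k := by
        apply Finset.sum_le_sum
        intro k _
        exact mul_le_mul_of_nonneg_left (Finset.inf'_le x (Finset.mem_univ k)) (hA.1 j k)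

/-- contraction of the spread for a matrix with entries all ≥ γ -/
lemma spread_contract {A : Matrix (Fin n) (Fin n) ℝ} (hA : RowStoch A)
    (hne : (Finset.univ : Finset (Fin n)).Nonempty) {γ : ℝ} (hγ : 0 ≤ γ)
    (hpos : ∀ j k, γ ≤ A j k) (x : Fin n → ℝ) :
    Finset.univ.sup' hne (A.mulVec x) - Finset.univ.inf' hne (A.mulVec x)
      ≤ (1 - 2 * γ) * (Finset.univ.sup' hne x - Finset.univ.inf' hne x) := by
  set M := Finset.univ.sup' hne x with hM
  set m := Finset.univ.inf' hne x with hm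
  obtain ⟨kM, _, hkM⟩ := Finset.exists_mem_eq_sup' hne x
  obtain ⟨km, _, hkm⟩ := Finset.exists_mem_eq_inf' hne x
  have hmM : m ≤ M := by
    rw [hm, hM, hkm]
    exact Finset.le_sup' x (Finset.mem_univ km)
  have hmv : ∀ j, A.mulVec x j = ∑ k, A j k * x k := fun j => by
    simp [Matrix.mulVec, dotProduct]
  have hxle : ∀ k, x k ≤ M := fun k => Finset.le_sup' x (Finset.mem_univ k)
  have hxge : ∀ k, m ≤ x k := fun k => Finset.inf'_le x (Finset.mem_univ k)
  have hub : ∀ j, A.mulVec x j ≤ M - γ * (M - m) := by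
    intro j
    have hexp : ∑ k, A j k * (M - x k) = M - ∑ k, A j k * x k := by
      simp only [mul_sub]
      rw [Finset.sum_sub_distrib, ← Finset.sum_mul, hA.2 j, one_mul]
    have t1 : γ * (M - m) ≤ A j km * (M - x km) := by
      have h0 : M - x km = M - m := by rw [hm, hkm]
      rw [h0]
      exact mul_le_mul_of_nonneg_right (hpos j km) (by linarith)
    have t2 : A j km * (M - x km) ≤ ∑ k, A j k * (M - x k) :=
      Finset.single_le_sum (f := fun k => A j k * (M - x k))
        (fun k _ => mul_nonneg (hγ.trans (hpos j k)) (by linarith [hxle k]))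
        (Finset.mem_univ km)
    have := hmv j
    linarith
  have hlb : ∀ j, m + γ * (M - m) ≤ A.mulVec x j := by
    intro j
    have hexp : ∑ k, A j k * (x k - m) = (∑ k, A j k * x k) - m := by
      simp only [mul_sub]
      rw [Finset.sum_sub_distrib, ← Finset.sum_mul, hA.2 j, one_mul]
    have t1 : γ * (M - m) ≤ A j kM * (x kM - m) := by
      have h0 : x kM - m = M - m := by rw [hM, hkM]
      rw [h0]
      exact mul_le_mul_of_nonneg_right (hpos j kM) (by linarith)
    have t2 : A j kM * (x kM - m) ≤ ∑ k, A j k * (x k - m) :=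
      Finset.single_le_sum (f := fun k => A j k * (x k - m))
        (fun k _ => mul_nonneg (hγ.trans (hpos j k)) (by linarith [hxge k]))
        (Finset.mem_univ kM)
    have := hmv j
    linarith
  have h1 : Finset.univ.sup' hne (A.mulVec x) ≤ M - γ * (M - m) :=
    Finset.sup'_le hne _ (fun j _ => hub j)
  have h2 : m + γ * (M - m) ≤ Finset.univ.inf' hne (A.mulVec x) :=
    Finset.le_inf' hne _ (fun j _ => hlb j)
  linarith
end Mat


section Prod
variable {n : ℕ}

noncomputable def Qprod (Wseq : ℕ → Matrix (Fin n) (Fin n) ℝ) (s : ℕ) :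
    ℕ → Matrix (Fin n) (Fin n) ℝ
  | 0 => 1
  | (r+1) => Wseq (s+r) * Qprod Wseq s r

variable {Wseq : ℕ → Matrix (Fin n) (Fin n) ℝ} (hRS : ∀ t, RowStoch (Wseq t))

include hRS

lemma Qprod_RS (s r : ℕ) : RowStoch (Qprod Wseq s r) := by
  induction r with
  | zero => exact RowStoch.one
  | succ r ih => exact (hRS (s+r)).mul ih

variable {δ : ℝ} (hδ0 : 0 < δ) (hδ1 : δ ≤ 1) (hdiag : ∀ t j, δ ≤ Wseq t j j)

include hδ0 hdiag

lemma Qprod_diag_step (s r : ℕ) (j k : Fin n) :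
    δ * Qprod Wseq s r j k ≤ Qprod Wseq s (r+1) j k := by
  show δ * Qprod Wseq s r j k ≤ (Wseq (s+r) * Qprod Wseq s r) j k
  rw [Matrix.mul_apply]
  have h1 : δ * Qprod Wseq s r j k ≤ Wseq (s+r) j j * Qprod Wseq s r j k :=
    mul_le_mul_of_nonneg_right (hdiag (s+r) j) ((Qprod_RS hRS s r).1 j k)
  refine h1.trans (Finset.single_le_sum (f := fun l => Wseq (s+r) j l * Qprod Wseq s r l k)
    (fun l _ => mul_nonneg ((hRS (s+r)).1 j l) ((Qprod_RS hRS s r).1 l k))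
    (Finset.mem_univ j))

lemma Qprod_diag_prop (s r m : ℕ) (j k : Fin n) {a : ℝ} (ha0 : 0 ≤ a)
    (ha : a ≤ Qprod Wseq s r j k) :
    a * δ ^ m ≤ Qprod Wseq s (r+m) j k := by
  induction m with
  | zero => simpa using ha
  | succ m ih =>
    have h1 := Qprod_diag_step hRS hδ0 hdiag s (r+m) j k
    have h2 : a * δ ^ (m+1) = δ * (a * δ ^ m) := by ring
    rw [h2, show r + (m+1) = (r+m)+1 from rfl]
    exact le_trans (mul_le_mul_of_nonneg_left ih hδ0.le) h1

lemma Qprod_edge_step (s r : ℕ) (j l k : Fin n)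
    (hjl : δ ≤ Wseq (s+r) j l) :
    δ * Qprod Wseq s r l k ≤ Qprod Wseq s (r+1) j k := by
  show δ * Qprod Wseq s r l k ≤ (Wseq (s+r) * Qprod Wseq s r) j k
  rw [Matrix.mul_apply]
  have h1 : δ * Qprod Wseq s r l k ≤ Wseq (s+r) j l * Qprod Wseq s r l k :=
    mul_le_mul_of_nonneg_right hjl ((Qprod_RS hRS s r).1 l k)
  refine h1.trans (Finset.single_le_sum (f := fun l' => Wseq (s+r) j l' * Qprod Wseq s r l' k)
    (fun l' _ => mul_nonneg ((hRS (s+r)).1 j l') ((Qprod_RS hRS s r).1 l' k))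
    (Finset.mem_univ l))

end Prod


section Win
variable {n : ℕ} (hn : 1 ≤ n)
  {Wseq : ℕ → Matrix (Fin n) (Fin n) ℝ} (hRS : ∀ t, RowStoch (Wseq t))
  {δ : ℝ} (hδ0 : 0 < δ) (hδ1 : δ ≤ 1) (hdiag : ∀ t j, δ ≤ Wseq t j j)
  {E : ℕ → Set (Fin n × Fin n)}
  (hedge : ∀ (t : ℕ) (j k : Fin n), j ≠ k → ((j, k) ∈ E t ∨ (k, j) ∈ E t) →
    δ ≤ Wseq t j k)
  {B : ℕ} (hB : 0 < B)
  (hconn : ∀ t : ℕ,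
    (SimpleGraph.fromRel (fun j k : Fin n =>
      ∃ τ : ℕ, t * B + 1 ≤ τ ∧ τ ≤ (t + 1) * B ∧ (j, k) ∈ E τ)).Connected)

include hn hRS hδ0 hδ1 hdiag hedge hB hconn

lemma window_grow (t0 : ℕ) (k : Fin n) (w : ℕ) :
    ∃ S : Finset (Fin n), k ∈ S ∧ min n (w+1) ≤ S.card ∧
      ∀ j ∈ S, δ ^ (w*B) ≤ Qprod Wseq (t0*B+1) (w*B) j k := by
  induction w with
  | zero =>
    refine ⟨{k}, Finset.mem_singleton_self k, by simp, ?_⟩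
    intro j hj
    rw [Finset.mem_singleton] at hj
    subst hj
    simp [Qprod, Matrix.one_apply]
  | succ w ih =>
    obtain ⟨S, hkS, hcard, hent⟩ := ih
    by_cases hful : n ≤ S.card
    · refine ⟨S, hkS, by omega, ?_⟩
      intro j hj
      rw [show (w+1)*B = w*B + B by ring, pow_add]
      exact Qprod_diag_prop hRS hδ0 hdiag (t0*B+1) (w*B) B j k
        (pow_nonneg hδ0.le _) (hent j hj)
    · -- S is a proper subset; use connectivity of window t0 + w
      have hSne : S ≠ Finset.univ := by
        intro h
        rw [h, Finset.card_univ, Fintype.card_fin] at hful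
        omega
      have hcard' : min n (w+1+1) ≤ S.card + 1 := by omega
      obtain ⟨u, huS, v, hvS, hadj⟩ := exists_crossing _ (hconn (t0+w)) S ⟨k, hkS⟩ hSne
      rw [SimpleGraph.fromRel_adj] at hadj
      obtain ⟨hne, hrel⟩ := hadj
      -- extract τ and the edge in either direction
      have hex : ∃ τ : ℕ, (t0+w) * B + 1 ≤ τ ∧ τ ≤ (t0+w+1) * B ∧
          ((u, v) ∈ E τ ∨ (v, u) ∈ E τ) := by
        rcases hrel with ⟨τ, h1, h2, h3⟩ | ⟨τ, h1, h2, h3⟩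
        · exact ⟨τ, h1, h2, Or.inl h3⟩
        · exact ⟨τ, h1, h2, Or.inr h3⟩
      obtain ⟨τ, hτ1, hτ2, hEuv⟩ := hex
      set s := t0*B+1 with hs
      have e1 : (t0+w)*B = t0*B + w*B := by ring
      have e2 : (t0+w+1)*B = t0*B + w*B + B := by ring
      have e3 : (w+1)*B = w*B + B := by ring
      have hre : ∃ re : ℕ, τ = s + re ∧ w*B ≤ re ∧ re + 1 ≤ (w+1)*B := by
        refine ⟨τ - s, ?_, ?_, ?_⟩ <;> omega
      obtain ⟨re, hτeq, hre1, hre2⟩ := hre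
      -- entries of all j ∈ S at step re
      have hSre : ∀ j ∈ S, δ ^ re ≤ Qprod Wseq s re j k := by
        intro j hj
        have := Qprod_diag_prop hRS hδ0 hdiag s (w*B) (re - w*B) j k
          (pow_nonneg hδ0.le _) (hent j hj)
        rw [show w*B + (re - w*B) = re by omega, ← pow_add,
          show w*B + (re - w*B) = re by omega] at this
        exact this
      -- v joins at step re+1 : δ ≤ W (s+re) v u (edge in some direction)
      have hWvu : δ ≤ Wseq (s + re) v u := by
        apply hedge (s+re) v u (Ne.symm hne)
        rw [← hτeq]
        tauto
      have hvre : δ ^ (re+1) ≤ Qprod Wseq s (re+1) v k := by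
        have h1 := Qprod_edge_step hRS hδ0 hdiag s re v u k hWvu
        have h2 : δ ^ (re+1) = δ * δ ^ re := by ring
        rw [h2]
        exact le_trans (mul_le_mul_of_nonneg_left (hSre u huS) hδ0.le) h1
      have hSre1 : ∀ j ∈ S, δ ^ (re+1) ≤ Qprod Wseq s (re+1) j k := by
        intro j hj
        have h1 := Qprod_diag_step hRS hδ0 hdiag s re j k
        have h2 : δ ^ (re+1) = δ * δ ^ re := by ring
        rw [h2]
        exact le_trans (mul_le_mul_of_nonneg_left (hSre j hj) hδ0.le) h1
      -- propagate from re+1 to (w+1)*B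
      refine ⟨insert v S, Finset.mem_insert_of_mem hkS, ?_, ?_⟩
      · rw [Finset.card_insert_of_notMem hvS]
        exact hcard'
      · intro j hj
        have hj' : δ ^ (re+1) ≤ Qprod Wseq s (re+1) j k := by
          rcases Finset.mem_insert.mp hj with h | h
          · subst h; exact hvre
          · exact hSre1 j h
        have := Qprod_diag_prop hRS hδ0 hdiag s (re+1) ((w+1)*B - (re+1)) j k
          (pow_nonneg hδ0.le _) hj'
        rw [show (re+1) + ((w+1)*B - (re+1)) = (w+1)*B by omega, ← pow_add,
          show (re+1) + ((w+1)*B - (re+1)) = (w+1)*B by omega] at this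
        exact this

lemma prod_pos (t0 : ℕ) (j k : Fin n) :
    δ ^ (n*B) ≤ Qprod Wseq (t0*B+1) (n*B) j k := by
  obtain ⟨S, hkS, hcard, hent⟩ := window_grow hn hRS hδ0 hδ1 hdiag hedge hB hconn t0 k n
  have hSuniv : S = Finset.univ := by
    have h1 : S.card ≤ n := by simpa using S.card_le_univ
    have h2 : S.card = n := by omega
    apply Finset.eq_univ_of_card
    rw [h2, Fintype.card_fin]
  exact hent j (hSuniv ▸ Finset.mem_univ j)

end Win


noncomputable def sprd {n : ℕ} (hne : (Finset.univ : Finset (Fin n)).Nonempty)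
    (v : Fin n → ℝ) : ℝ :=
  Finset.univ.sup' hne v - Finset.univ.inf' hne v

section Spr
variable {n : ℕ} (hne : (Finset.univ : Finset (Fin n)).Nonempty)

lemma sprd_nonneg (v : Fin n → ℝ) : 0 ≤ sprd hne v := by
  obtain ⟨j, _⟩ := hne
  unfold sprd
  have h1 := Finset.le_sup' v (Finset.mem_univ j)
  have h2 := Finset.inf'_le v (Finset.mem_univ j)
  linarith

lemma abs_sub_le_sprd (v : Fin n → ℝ) (j k : Fin n) : |v j - v k| ≤ sprd hne v := by
  unfold sprd
  rw [abs_sub_le_iff]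
  constructor
  · have h1 := Finset.le_sup' v (Finset.mem_univ j)
    have h2 := Finset.inf'_le v (Finset.mem_univ k)
    linarith
  · have h1 := Finset.le_sup' v (Finset.mem_univ k)
    have h2 := Finset.inf'_le v (Finset.mem_univ j)
    linarith

lemma mulVec_abs_le {A : Matrix (Fin n) (Fin n) ℝ} (hA : RowStoch A)
    {d : Fin n → ℝ} {cb : ℝ} (hd : ∀ k, |d k| ≤ cb) (j : Fin n) :
    |A.mulVec d j| ≤ cb := by
  have hmv : A.mulVec d j = ∑ k, A j k * d k := by
    simp [Matrix.mulVec, dotProduct]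
  rw [hmv]
  calc |∑ k, A j k * d k| ≤ ∑ k, |A j k * d k| := Finset.abs_sum_le_sum_abs _ _
    _ ≤ ∑ k, A j k * cb := by
        apply Finset.sum_le_sum
        intro k _
        rw [abs_mul, abs_of_nonneg (hA.1 j k)]
        exact mul_le_mul_of_nonneg_left (hd k) (hA.1 j k)
    _ = cb := by rw [← Finset.sum_mul, hA.2 j, one_mul]

variable {Wseq : ℕ → Matrix (Fin n) (Fin n) ℝ} (hRS : ∀ t, RowStoch (Wseq t))
  {x u : ℕ → Fin n → ℝ}
  (hdyn : ∀ t j, x (t+1) j = (Wseq t).mulVec (x t) j + u t j)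
  {b : ℕ → ℝ} (hb : ∀ t j, |u t j| ≤ b t) (hb0 : ∀ t, 0 ≤ b t)

include hRS hdyn hb hb0

lemma sprd_step (t : ℕ) : sprd hne (x (t+1)) ≤ sprd hne (x t) + 2 * b t := by
  have hub : ∀ j, x (t+1) j ≤ Finset.univ.sup' hne (x t) + b t := by
    intro j
    rw [hdyn t j]
    have h1 := mulVec_le_sup (hRS t) hne (x t) j
    have h2 := abs_le.mp (hb t j)
    linarith [h2.2]
  have hlb : ∀ j, Finset.univ.inf' hne (x t) - b t ≤ x (t+1) j := by
    intro j
    rw [hdyn t j]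
    have h1 := inf_le_mulVec (hRS t) hne (x t) j
    have h2 := abs_le.mp (hb t j)
    linarith [h2.1]
  unfold sprd
  have h1 : Finset.univ.sup' hne (x (t+1)) ≤ Finset.univ.sup' hne (x t) + b t :=
    Finset.sup'_le hne _ (fun j _ => hub j)
  have h2 : Finset.univ.inf' hne (x t) - b t ≤ Finset.univ.inf' hne (x (t+1)) :=
    Finset.le_inf' hne _ (fun j _ => hlb j)
  linarith

lemma sprd_steps (s r : ℕ) :
    sprd hne (x (s+r)) ≤ sprd hne (x s) + 2 * ∑ m ∈ Finset.range r, b (s+m) := by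
  induction r with
  | zero => simp
  | succ r ih =>
    have h1 := sprd_step hne hRS hdyn hb hb0 (s+r)
    rw [Finset.sum_range_succ]
    rw [show s + (r+1) = (s+r)+1 from rfl]
    linarith

lemma noiseless_compare (s : ℕ) :
    ∀ r j, |x (s+r) j - (Qprod Wseq s r).mulVec (x s) j| ≤ ∑ m ∈ Finset.range r, b (s+m) := by
  intro r
  induction r with
  | zero =>
    intro j
    simp [Qprod]
  | succ r ih =>
    intro j
    have hy : (Qprod Wseq s (r+1)).mulVec (x s) =
        (Wseq (s+r)).mulVec ((Qprod Wseq s r).mulVec (x s)) := by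
      show (Wseq (s+r) * Qprod Wseq s r).mulVec (x s) = _
      rw [← Matrix.mulVec_mulVec]
    have key : x (s+(r+1)) j - (Qprod Wseq s (r+1)).mulVec (x s) j
        = (Wseq (s+r)).mulVec (fun k => x (s+r) k - (Qprod Wseq s r).mulVec (x s) k) j
          + u (s+r) j := by
      rw [show s + (r+1) = (s+r)+1 from rfl, hdyn (s+r) j, hy]
      have : (Wseq (s+r)).mulVec (fun k => x (s+r) k - (Qprod Wseq s r).mulVec (x s) k) j
          = (Wseq (s+r)).mulVec (x (s+r)) j
            - (Wseq (s+r)).mulVec ((Qprod Wseq s r).mulVec (x s)) j := by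
        simp [Matrix.mulVec, dotProduct, mul_sub, Finset.sum_sub_distrib]
      rw [this]
      ring
    rw [key, Finset.sum_range_succ]
    have h1 := mulVec_abs_le (hRS (s+r)) (d := fun k => x (s+r) k - (Qprod Wseq s r).mulVec (x s) k)
      (cb := ∑ m ∈ Finset.range r, b (s+m)) (fun k => ih k) j
    calc |_ + u (s+r) j| ≤ _ + |u (s+r) j| := abs_add_le _ _
      _ ≤ _ := by
        have := hb (s+r) j
        linarith [h1]

end Spr


lemma seq_decay {a e : ℕ → ℝ} {q : ℝ} (hq0 : 0 ≤ q) (hq1 : q < 1)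
    (ha : ∀ m, 0 ≤ a m) (hrec : ∀ m, a (m+1) ≤ q * a m + e m)
    (he : ∀ ε > 0, ∃ M, ∀ m ≥ M, e m ≤ ε) :
    ∀ ε > 0, ∃ M, ∀ m ≥ M, a m ≤ ε := by
  intro ε hε
  obtain ⟨M0, hM0⟩ := he (ε * (1 - q) / 2) (by nlinarith)
  have key : ∀ i, a (M0 + i) ≤ q ^ i * a M0 + ε / 2 := by
    intro i
    induction i with
    | zero => simp; nlinarith [ha M0]
    | succ i ih =>
      have h1 := hrec (M0 + i)
      have h2 := hM0 (M0 + i) (by omega)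
      rw [show M0 + (i+1) = (M0+i)+1 from rfl]
      calc a ((M0+i)+1) ≤ q * a (M0+i) + e (M0+i) := h1
        _ ≤ q * (q ^ i * a M0 + ε / 2) + ε * (1-q)/2 := by
            have := mul_le_mul_of_nonneg_left ih hq0
            linarith
        _ = q ^ (i+1) * a M0 + (q * ε / 2 + ε * (1-q)/2) := by ring
        _ ≤ q ^ (i+1) * a M0 + ε / 2 := by nlinarith
  obtain ⟨i0, hi0⟩ : ∃ i0 : ℕ, q ^ i0 * a M0 ≤ ε / 2 := by
    rcases eq_or_lt_of_le (ha M0) with h | h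
    · exact ⟨0, by rw [← h]; simp; positivity⟩
    · obtain ⟨i0, hi0⟩ := exists_pow_lt_of_lt_one (show (0:ℝ) < ε / (2 * a M0) by positivity) hq1
      have h2 : q ^ i0 * a M0 < ε / (2 * a M0) * a M0 :=
        mul_lt_mul_of_pos_right hi0 h
      have h3 : ε / (2 * a M0) * a M0 = ε / 2 := by
        field_simp
      exact ⟨i0, by linarith⟩
  refine ⟨M0 + i0, ?_⟩
  intro m hm
  obtain ⟨i, rfl⟩ : ∃ i, m = M0 + i := ⟨m - M0, by omega⟩
  have h1 := key i
  have h2 : q ^ i ≤ q ^ i0 := pow_le_pow_of_le_one hq0 hq1.le (by omega)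
  have h3 : q ^ i * a M0 ≤ q ^ i0 * a M0 := mul_le_mul_of_nonneg_right h2 (ha M0)
  linarith

section Cons
variable {n : ℕ} (hn : 1 ≤ n) (hne : (Finset.univ : Finset (Fin n)).Nonempty)
  {Wseq : ℕ → Matrix (Fin n) (Fin n) ℝ} (hRS : ∀ t, RowStoch (Wseq t))
  {δ : ℝ} (hδ0 : 0 < δ) (hδhalf : δ ≤ 1/2) (hdiag : ∀ t j, δ ≤ Wseq t j j)
  {E : ℕ → Set (Fin n × Fin n)}
  (hedge : ∀ (t : ℕ) (j k : Fin n), j ≠ k → ((j, k) ∈ E t ∨ (k, j) ∈ E t) →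
    δ ≤ Wseq t j k)
  {B : ℕ} (hB : 0 < B)
  (hconn : ∀ t : ℕ,
    (SimpleGraph.fromRel (fun j k : Fin n =>
      ∃ τ : ℕ, t * B + 1 ≤ τ ∧ τ ≤ (t + 1) * B ∧ (j, k) ∈ E τ)).Connected)
  {x u : ℕ → Fin n → ℝ}
  (hdyn : ∀ t j, x (t+1) j = (Wseq t).mulVec (x t) j + u t j)
  {b : ℕ → ℝ} (hb : ∀ t j, |u t j| ≤ b t) (hb0 : ∀ t, 0 ≤ b t)
  (hbsmall : ∀ ε > 0, ∃ M, ∀ t ≥ M, b t ≤ ε)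

include hn hne hRS hδ0 hδhalf hdiag hedge hB hconn hdyn hb hb0

lemma sprd_window (t0 : ℕ) :
    sprd hne (x (t0*B+1 + n*B)) ≤ (1 - 2 * δ^(n*B)) * sprd hne (x (t0*B+1))
      + 2 * ∑ m ∈ Finset.range (n*B), b (t0*B+1+m) := by
  set s := t0*B+1 with hs
  set K := n*B with hK
  set err := ∑ m ∈ Finset.range K, b (s+m) with herr
  have herr0 : 0 ≤ err := Finset.sum_nonneg fun m _ => hb0 _
  have hδ1 : δ ≤ 1 := by linarith
  have hQRS := Qprod_RS hRS s K
  have hQpos : ∀ j k, δ^K ≤ Qprod Wseq s K j k :=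
    fun j k => prod_pos hn hRS hδ0 hδ1 hdiag hedge hB hconn t0 j k
  have hcmp := noiseless_compare hRS hdyn hb hb0 s K
  set y := (Qprod Wseq s K).mulVec (x s) with hy
  have hsup : Finset.univ.sup' hne (x (s+K)) ≤ Finset.univ.sup' hne y + err := by
    apply Finset.sup'_le
    intro j _
    have h1 := abs_le.mp (hcmp j)
    have h2 := Finset.le_sup' y (Finset.mem_univ j)
    linarith [h1.2]
  have hinf : Finset.univ.inf' hne y - err ≤ Finset.univ.inf' hne (x (s+K)) := by
    apply Finset.le_inf'
    intro j _
    have h1 := abs_le.mp (hcmp j)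
    have h2 := Finset.inf'_le y (Finset.mem_univ j)
    linarith [h1.1]
  have hctr := spread_contract hQRS hne (pow_nonneg hδ0.le K) hQpos (x s)
  unfold sprd at *
  linarith

include hbsmall in
lemma consensus_decay : ∀ ε > 0, ∃ T, ∀ t ≥ T, sprd hne (x t) ≤ ε := by
  set K := n*B with hK
  have hK0 : 0 < K := Nat.mul_pos (by omega) hB
  set γ := δ ^ K with hγ
  have hγ0 : 0 < γ := pow_pos hδ0 K
  have hγhalf : γ ≤ 1/2 := by
    calc γ ≤ δ := pow_le_of_le_one hδ0.le (by linarith) (by omega)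
      _ ≤ 1/2 := hδhalf
  set q := 1 - 2 * γ with hq
  have hq0 : 0 ≤ q := by rw [hq]; linarith
  have hq1 : q < 1 := by rw [hq]; linarith
  set a := fun m => sprd hne (x (m*K + 1)) with ha
  set β := fun m => ∑ r ∈ Finset.range K, b (m*K+1+r) with hβ
  have hβ0 : ∀ m, 0 ≤ β m := fun m => Finset.sum_nonneg fun r _ => hb0 _
  have hrec : ∀ m, a (m+1) ≤ q * a m + 2 * β m := by
    intro m
    have := sprd_window hn hne hRS hδ0 hδhalf hdiag hedge hB hconn hdyn hb hb0 (m*n)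
    rw [show m*n*B = m*K by rw [hK]; ring] at this
    rw [show m*K+1 + n*B = (m+1)*K + 1 by rw [hK]; ring] at this
    rw [show n*B = K from rfl] at this
    exact this
  have hβsmall : ∀ ε > 0, ∃ M, ∀ m ≥ M, 2 * β m ≤ ε := by
    intro ε hε
    obtain ⟨M, hM⟩ := hbsmall (ε / (2 * K + 2)) (by positivity)
    refine ⟨M, fun m hm => ?_⟩
    have hsum : β m ≤ K * (ε / (2 * K + 2)) := by
      rw [hβ]
      calc ∑ r ∈ Finset.range K, b (m*K+1+r)
          ≤ ∑ _r ∈ Finset.range K, (ε / (2 * K + 2)) := by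
            apply Finset.sum_le_sum
            intro r _
            apply hM
            calc M ≤ m := hm
              _ ≤ m*K+1+r := by nlinarith [hK0]
        _ = K * (ε / (2 * K + 2)) := by rw [Finset.sum_const, Finset.card_range]; simp
    have hKpos : (0:ℝ) < K := by exact_mod_cast hK0
    rw [div_eq_inv_mul] at hsum
    have : K * ((2 * (K:ℝ) + 2)⁻¹ * ε) ≤ ε / 2 := by
      rw [div_eq_inv_mul]
      rw [← mul_assoc]
      apply mul_le_mul_of_nonneg_right _ hε.le
      rw [mul_inv_le_iff₀ (by positivity)]
      nlinarith
    linarith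
  have hdecay := seq_decay (a := a) (e := fun m => 2 * β m) hq0 hq1
    (fun m => sprd_nonneg hne (x (m*K+1))) hrec hβsmall
  intro ε hε
  obtain ⟨M1, hM1⟩ := hdecay (ε/2) (by positivity)
  obtain ⟨M2, hM2⟩ := hβsmall (ε/2) (by positivity)
  refine ⟨(max M1 M2) * K + 1, ?_⟩
  intro t ht
  set m := (t - 1) / K with hm
  set r := (t - 1) % K with hr
  have h0 : K * m + r = t - 1 := by rw [hm, hr]; exact Nat.div_add_mod (t-1) K
  have hmr : t = m * K + 1 + r := by
    have hcomm : K * m = m * K := Nat.mul_comm K m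
    omega
  have hmge : max M1 M2 ≤ m := by
    have h1 : (max M1 M2) * K ≤ t - 1 := by omega
    rw [hm]
    exact Nat.le_div_iff_mul_le hK0 |>.mpr h1
  have hrK : r < K := Nat.mod_lt _ hK0
  have hstep := sprd_steps hne hRS hdyn hb hb0 (m*K+1) r
  rw [← hmr] at hstep
  have hpart : ∑ i ∈ Finset.range r, b (m*K+1+i) ≤ β m := by
    rw [hβ]
    apply Finset.sum_le_sum_of_subset_of_nonneg
    · exact Finset.range_subset_range.mpr hrK.le
    · intro i _ _; exact hb0 _
  have h1 := hM1 m (le_trans (le_max_left _ _) hmge)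
  have h2 := hM2 m (le_trans (le_max_right _ _) hmge)
  have : a m ≤ ε/2 := h1
  rw [ha] at this
  linarith

end Cons


open Classical in
noncomputable def mixW {n : ℕ} (E : ℕ → Set (Fin n × Fin n)) (t : ℕ) :
    Matrix (Fin n) (Fin n) ℝ :=
  fun j k =>
    if j = k then
      1 - (1/(2*(n:ℝ))) * (Finset.univ.filter (fun k' => k' ≠ j ∧ (j, k') ∈ E t)).card
    else if (j, k) ∈ E t then 1/(2*(n:ℝ)) else 0

open Classical in
lemma mixW_card_le {n : ℕ} (hn : 1 ≤ n) (E : ℕ → Set (Fin n × Fin n)) (t : ℕ) (j : Fin n) :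
    ((Finset.univ.filter (fun k' => k' ≠ j ∧ (j, k') ∈ E t)).card : ℝ) ≤ (n:ℝ) - 1 := by
  have h1 : (Finset.univ.filter (fun k' => k' ≠ j ∧ (j, k') ∈ E t)) ⊆ Finset.univ.erase j := by
    intro k hk
    simp only [Finset.mem_filter] at hk
    exact Finset.mem_erase.mpr ⟨hk.2.1, Finset.mem_univ k⟩
  have h2 := Finset.card_le_card h1
  have h3 : (Finset.univ.erase j).card = n - 1 := by
    rw [Finset.card_erase_of_mem (Finset.mem_univ j), Finset.card_univ, Fintype.card_fin]
  rw [h3] at h2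
  have h4 : ((Finset.univ.filter (fun k' => k' ≠ j ∧ (j, k') ∈ E t)).card : ℝ)
      ≤ ((n - 1 : ℕ) : ℝ) := by exact_mod_cast h2
  rw [Nat.cast_sub hn] at h4
  simpa using h4

open Classical in
lemma mixW_diag_ge {n : ℕ} (hn : 1 ≤ n) (E : ℕ → Set (Fin n × Fin n)) (t : ℕ) (j : Fin n) :
    1/2 ≤ mixW E t j j := by
  unfold mixW
  rw [if_pos rfl]
  have hcard := mixW_card_le hn E t j
  have hnpos : (0:ℝ) < n := by exact_mod_cast hn
  have h1 : (1/(2*(n:ℝ))) * ((Finset.univ.filter (fun k' => k' ≠ j ∧ (j, k') ∈ E t)).card : ℝ)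
      ≤ (1/(2*(n:ℝ))) * ((n:ℝ) - 1) :=
    mul_le_mul_of_nonneg_left hcard (by positivity)
  have h2 : (1/(2*(n:ℝ))) * ((n:ℝ) - 1) ≤ 1/2 := by
    rw [div_mul_eq_mul_div, one_mul, div_le_div_iff₀ (by positivity) (by norm_num)]
    nlinarith
  linarith

open Classical in
lemma mixW_nonneg {n : ℕ} (hn : 1 ≤ n) (E : ℕ → Set (Fin n × Fin n)) (t : ℕ) (j k : Fin n) :
    0 ≤ mixW E t j k := by
  by_cases h : j = k
  · subst h
    have := mixW_diag_ge hn E t j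
    linarith
  · unfold mixW
    rw [if_neg h]
    have hnpos : (0:ℝ) < n := by exact_mod_cast hn
    by_cases h2 : (j, k) ∈ E t
    · rw [if_pos h2]; positivity
    · rw [if_neg h2]

lemma mixW_delta_le_diag {n : ℕ} (hn : 1 ≤ n) (E : ℕ → Set (Fin n × Fin n)) (t : ℕ) (j : Fin n) :
    1/(2*(n:ℝ)) ≤ mixW E t j j := by
  have h1 := mixW_diag_ge hn E t j
  have h1n : (1:ℝ) ≤ (n:ℝ) := by exact_mod_cast hn
  have : 1/(2*(n:ℝ)) ≤ 1/2 := by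
    rw [div_le_div_iff₀ (by positivity) (by norm_num)]
    nlinarith
  linarith

open Classical in
lemma mixW_edge {n : ℕ} (E : ℕ → Set (Fin n × Fin n)) (t : ℕ) (j k : Fin n)
    (hjk : j ≠ k) (h : (j, k) ∈ E t) : mixW E t j k = 1/(2*(n:ℝ)) := by
  unfold mixW
  rw [if_neg hjk, if_pos h]

open Classical in
lemma mixW_zero {n : ℕ} (E : ℕ → Set (Fin n × Fin n)) (t : ℕ) (j k : Fin n)
    (hjk : j ≠ k) (h : (j, k) ∉ E t) : mixW E t j k = 0 := by
  unfold mixW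
  rw [if_neg hjk, if_neg h]

open Classical in
lemma mixW_row_sum {n : ℕ} (E : ℕ → Set (Fin n × Fin n)) (t : ℕ) (j : Fin n) :
    ∑ k, mixW E t j k = 1 := by
  have hsplit : ∑ k, mixW E t j k
      = mixW E t j j + ∑ k ∈ Finset.univ.erase j, mixW E t j k := by
    rw [← Finset.add_sum_erase _ _ (Finset.mem_univ j)]
  rw [hsplit]
  have hrest : ∑ k ∈ Finset.univ.erase j, mixW E t j k
      = (1/(2*(n:ℝ))) * (Finset.univ.filter (fun k' => k' ≠ j ∧ (j, k') ∈ E t)).card := by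
    have h1 : ∀ k ∈ Finset.univ.erase j, mixW E t j k
        = if (j, k) ∈ E t then 1/(2*(n:ℝ)) else 0 := by
      intro k hk
      have hne : j ≠ k := fun h => (Finset.mem_erase.mp hk).1 h.symm
      unfold mixW
      rw [if_neg hne]
    rw [Finset.sum_congr rfl h1, Finset.sum_ite, Finset.sum_const, Finset.sum_const]
    simp only [smul_zero, add_zero, nsmul_eq_mul]
    have hfe : (Finset.univ.erase j).filter (fun k => (j, k) ∈ E t)
        = Finset.univ.filter (fun k' => k' ≠ j ∧ (j, k') ∈ E t) := by
      ext k
      simp only [Finset.mem_filter, Finset.mem_erase, Finset.mem_univ, true_and, and_true]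
      try tauto
    rw [hfe, mul_comm]
  rw [hrest]
  unfold mixW
  rw [if_pos rfl]
  ring

open Classical in
lemma mixW_symm {n : ℕ} (E : ℕ → Set (Fin n × Fin n))
    (hEsym : ∀ (t : ℕ) (j k : Fin n), (j, k) ∈ E t → (k, j) ∈ E t)
    (t : ℕ) (j k : Fin n) : mixW E t j k = mixW E t k j := by
  by_cases h : j = k
  · subst h; rfl
  · unfold mixW
    rw [if_neg h, if_neg (show ¬ k = j from fun h' => h h'.symm)]
    by_cases h2 : (j, k) ∈ E t
    · rw [if_pos h2, if_pos (hEsym t j k h2)]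
    · rw [if_neg h2, if_neg (fun h' => h2 (hEsym t k j h'))]

lemma mixW_col_sum {n : ℕ} (E : ℕ → Set (Fin n × Fin n))
    (hEsym : ∀ (t : ℕ) (j k : Fin n), (j, k) ∈ E t → (k, j) ∈ E t)
    (t : ℕ) (k : Fin n) : ∑ j, mixW E t j k = 1 := by
  calc ∑ j, mixW E t j k = ∑ j, mixW E t k j :=
        Finset.sum_congr rfl (fun j _ => mixW_symm E hEsym t j k)
    _ = 1 := mixW_row_sum E t k


open Filter

noncomputable def etaSeq (t : ℕ) : ℝ := ((t:ℝ)+1)⁻¹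

lemma etaSeq_pos (t : ℕ) : 0 < etaSeq t := by
  unfold etaSeq; positivity

lemma etaSeq_anti {s t : ℕ} (h : s ≤ t) : etaSeq t ≤ etaSeq s := by
  unfold etaSeq
  apply inv_anti₀ (by positivity)
  have : (s:ℝ) ≤ t := by exact_mod_cast h
  linarith

lemma etaSeq_small : ∀ ε > 0, ∃ M : ℕ, ∀ t ≥ M, etaSeq t ≤ ε := by
  intro ε hε
  obtain ⟨M, hM⟩ := exists_nat_gt (1/ε)
  refine ⟨M, fun t ht => ?_⟩
  have h1 : (1/ε : ℝ) < (t:ℝ) + 1 := by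
    have : (M:ℝ) ≤ t := by exact_mod_cast ht
    linarith
  rw [show etaSeq t = 1/((t:ℝ)+1) by unfold etaSeq; rw [one_div]]
  rw [div_le_iff₀ (by positivity)]
  rw [div_lt_iff₀ hε] at h1
  nlinarith

lemma etaSeq_sum_tendsto :
    Tendsto (fun T => ∑ t ∈ Finset.range T, etaSeq t) atTop atTop := by
  have h := Real.tendsto_sum_range_one_div_nat_succ_atTop
  have heq : (fun T => ∑ t ∈ Finset.range T, etaSeq t)
      = fun T => ∑ i ∈ Finset.range T, (1 / ((i:ℝ) + 1)) := by
    funext T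
    apply Finset.sum_congr rfl
    intro t _
    unfold etaSeq
    rw [one_div]
  rw [heq]
  exact h

lemma etaSeq_sq_summable : Summable fun t => (etaSeq t) ^ 2 := by
  have h1 : Summable (fun n : ℕ => 1 / (n:ℝ) ^ 2) := Real.summable_one_div_nat_pow.mpr (by norm_num)
  have h2 := (summable_nat_add_iff 1).mpr h1
  apply h2.congr
  intro t
  unfold etaSeq
  push_cast
  rw [one_div, ← inv_pow]

lemma etaSeq_diverge (X : ℝ) (T1 : ℕ) :
    ∃ T : ℕ, T1 ≤ T ∧ X ≤ ∑ s ∈ Finset.Ico T1 T, etaSeq s := by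
  have h := etaSeq_sum_tendsto
  rw [tendsto_atTop_atTop] at h
  obtain ⟨T0, hT0⟩ := h (X + ∑ s ∈ Finset.range T1, etaSeq s)
  refine ⟨max T0 T1, le_max_right _ _, ?_⟩
  have h1 := hT0 (max T0 T1) (le_max_left _ _)
  have h2 : ∑ s ∈ Finset.Ico T1 (max T0 T1), etaSeq s
      = ∑ s ∈ Finset.range (max T0 T1), etaSeq s - ∑ s ∈ Finset.range T1, etaSeq s := by
    simp only [Finset.range_eq_Ico]
    have h3 := Finset.sum_Ico_consecutive etaSeq (Nat.zero_le T1) (le_max_right T0 T1)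
    linarith
  rw [h2]
  linarith


lemma abs_sub_avg_le {n : ℕ} (hn : 1 ≤ n)
    (hne : (Finset.univ : Finset (Fin n)).Nonempty) (v : Fin n → ℝ) (j : Fin n) :
    |v j - (∑ k, v k)/n| ≤ sprd hne v := by
  have hnpos : (0:ℝ) < n := by exact_mod_cast hn
  have h1 : (∑ k, v k) ≤ n * Finset.univ.sup' hne v := by
    calc ∑ k, v k ≤ ∑ _k : Fin n, Finset.univ.sup' hne v :=
          Finset.sum_le_sum (fun k _ => Finset.le_sup' v (Finset.mem_univ k))
      _ = n * Finset.univ.sup' hne v := by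
          rw [Finset.sum_const, Finset.card_univ, Fintype.card_fin, nsmul_eq_mul]
  have h2 : (n:ℝ) * Finset.univ.inf' hne v ≤ ∑ k, v k := by
    calc (n:ℝ) * Finset.univ.inf' hne v = ∑ _k : Fin n, Finset.univ.inf' hne v := by
          rw [Finset.sum_const, Finset.card_univ, Fintype.card_fin, nsmul_eq_mul]
      _ ≤ ∑ k, v k := Finset.sum_le_sum (fun k _ => Finset.inf'_le v (Finset.mem_univ k))
  have havg1 : (∑ k, v k)/n ≤ Finset.univ.sup' hne v := by
    rw [div_le_iff₀ hnpos]
    linarith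
  have havg2 : Finset.univ.inf' hne v ≤ (∑ k, v k)/n := by
    rw [le_div_iff₀ hnpos]
    linarith
  have hj1 := Finset.le_sup' v (Finset.mem_univ j)
  have hj2 := Finset.inf'_le v (Finset.mem_univ j)
  unfold sprd
  rw [abs_sub_le_iff]
  constructor <;> linarith

/-- Generic one-sided convergence for a perturbed scalar descent recursion. -/
lemma eventually_le_band (zb ε c0 : ℝ) (hε : 0 < ε) (hc0 : 0 < c0) (y : ℕ → ℝ) (T1 : ℕ)
    (hstep : ∀ t, T1 ≤ t → |y (t+1) - y t| ≤ ε/2)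
    (hdown : ∀ t, T1 ≤ t → zb + ε/2 ≤ y t → y (t+1) ≤ y t)
    (hdrift : ∀ t, T1 ≤ t → zb + ε ≤ y t → y (t+1) ≤ y t - c0 * etaSeq t) :
    ∃ T2, ∀ t, T2 ≤ t → y t ≤ zb + ε := by
  -- entry
  have hentry : ∃ s, T1 ≤ s ∧ y s ≤ zb + ε := by
    by_contra hcon
    push_neg at hcon
    have habove : ∀ s, T1 ≤ s → zb + ε < y s := hcon
    have hdec : ∀ k, y (T1 + k) ≤ y T1 - c0 * ∑ s ∈ Finset.Ico T1 (T1 + k), etaSeq s := by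
      intro k
      induction k with
      | zero => simp
      | succ k ih =>
        have h1 := hdrift (T1 + k) (by omega) (le_of_lt (habove _ (by omega)))
        rw [show T1 + (k+1) = (T1+k)+1 from rfl]
        rw [Finset.sum_Ico_succ_top (by omega)]
        calc y ((T1+k)+1) ≤ y (T1+k) - c0 * etaSeq (T1+k) := h1
          _ ≤ y T1 - c0 * ∑ s ∈ Finset.Ico T1 (T1+k), etaSeq s - c0 * etaSeq (T1+k) := by
              linarith
          _ = y T1 - c0 * (∑ s ∈ Finset.Ico T1 (T1+k), etaSeq s + etaSeq (T1+k)) := by ring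
    obtain ⟨T, hT1, hTsum⟩ := etaSeq_diverge ((y T1 - zb)/c0) T1
    have h2 := hdec (T - T1)
    rw [show T1 + (T - T1) = T by omega] at h2
    have h3 : c0 * ((y T1 - zb)/c0) ≤ c0 * ∑ s ∈ Finset.Ico T1 T, etaSeq s :=
      mul_le_mul_of_nonneg_left hTsum hc0.le
    rw [mul_div_cancel₀ _ hc0.ne'] at h3
    have h4 := habove T hT1
    linarith
  obtain ⟨s, hs1, hs2⟩ := hentry
  refine ⟨s, ?_⟩
  intro t ht
  induction t, ht using Nat.le_induction with
  | base => exact hs2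
  | succ t ht ih =>
    by_cases hcase : y t ≤ zb + ε/2
    · have h1 := hstep t (le_trans hs1 ht)
      have h2 := abs_le.mp h1
      linarith [h2.2]
    · push_neg at hcase
      have h1 := hdown t (le_trans hs1 ht) hcase.le
      linarith

set_option maxHeartbeats 1000000

/-- Theorem 1 of the paper: distributed priority-based load shedding.
Under a persistently connected time-varying communication network, there exist
doubly stochastic mixing matrices (compatible with the network) and step sizes
such that, for any local load-shedding estimates satisfying the consensus-rate
bound, the iterates of Algorithm 1 eventually identify, in each region, exactly
the set of loads with criticality at least `ẑ`; in particular the local minimum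
criticality values `ζ_j(t)` converge in finite time. -/
theorem distributed_priority_load_shedding
    {I : Type*} [Fintype I] [Nonempty I]
    (ℓ C : I → ℝ) (hℓ : ∀ i, 0 < ℓ i) (hC : ∀ i, C i ∈ Set.Icc (0 : ℝ) 1)
    -- the regions: `R i` is the region of load `i`, so `L_j = {i | R i = j}`
    (n : ℕ) (hn : 1 ≤ n) (R : I → Fin n)
    (P : ℝ) (hP0 : 0 < P) (hPtot : P ≤ ∑ i, ℓ i)
    (zstar : ℝ) (hopt : OptThresh ℓ C P zstar)
    (hstrict : P < ccf ℓ C zstar)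
    (c : ℝ) (hc : 0 < c) (hgap : GapCond C c)
    (zhat : ℝ) (hzhat : sccf ℓ C c zhat = P)
    -- time-varying communication network
    (E : ℕ → Set (Fin n × Fin n))
    (hEsym : ∀ (t : ℕ) (j k : Fin n), (j, k) ∈ E t → (k, j) ∈ E t)
    (B : ℕ) (hB : 0 < B)
    (hconn : ∀ t : ℕ,
      (SimpleGraph.fromRel (fun j k : Fin n =>
        ∃ τ : ℕ, t * B + 1 ≤ τ ∧ τ ≤ (t + 1) * B ∧ (j, k) ∈ E τ)).Connected) :
    ∃ (W : ℕ → Matrix (Fin n) (Fin n) ℝ) (η : ℕ → ℝ),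
      -- doubly stochastic mixing matrices compatible with the network
      (∀ (t : ℕ) (j k : Fin n), 0 ≤ W t j k) ∧
      (∀ (t : ℕ) (j : Fin n), ∑ k, W t j k = 1) ∧
      (∀ (t : ℕ) (k : Fin n), ∑ j, W t j k = 1) ∧
      (∀ (t : ℕ) (j k : Fin n), k ≠ j → (j, k) ∉ E t → W t k j = 0) ∧
      -- admissible step sizes
      (∀ t, 0 ≤ η t) ∧
      Tendsto (fun T => ∑ t ∈ Finset.range T, η t) atTop atTop ∧
      (Summable fun t => (η t) ^ 2) ∧
      -- convergence of Algorithm 1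
      (∀ θ : ℝ, 0 < θ →
        ∀ p : Fin n → ℕ → ℝ,
          (∀ j : Fin n, ∃ Mp : ℝ, ∀ t : ℕ, |p j t| ≤ Mp) →
          (∀ t : ℕ, |(∑ j, p j t) - P| ≤ θ * η t) →
        ∀ x : ℕ → Fin n → ℝ,
          (∀ (t : ℕ) (j : Fin n),
            x (t + 1) j = (∑ k, W t j k * x t k)
              - η t * ((∑ i ∈ Finset.univ.filter (fun i => R i = j),
                          ℓ i * rampW c (x t j - C i)) - p j t)) →
          ∃ T : ℕ, ∀ t, T ≤ t → ∀ j : Fin n,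
            (Finset.univ.filter (fun i => R i = j ∧ x t j ≤ C i)
              = Finset.univ.filter (fun i => R i = j ∧ zhat ≤ C i)) ∧
            (∀ (hne : (Finset.univ.filter
                  (fun i => R i = j ∧ x t j ≤ C i)).Nonempty)
               (hne' : (Finset.univ.filter
                  (fun i => R i = j ∧ zhat ≤ C i)).Nonempty),
              (Finset.univ.filter (fun i => R i = j ∧ x t j ≤ C i)).inf' hne C
                = (Finset.univ.filter
                    (fun i => R i = j ∧ zhat ≤ C i)).inf' hne' C)) := by
  classical
  have hnR : (1:ℝ) ≤ (n:ℝ) := by exact_mod_cast hn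
  have hnpos : (0:ℝ) < n := by linarith
  have hne : (Finset.univ : Finset (Fin n)).Nonempty :=
    ⟨⟨0, by omega⟩, Finset.mem_univ _⟩
  obtain ⟨i0, hi0⟩ := exists_crit_eq hc hℓ hP0 hopt.2 hstrict
  obtain ⟨hz1, hz2⟩ := zhat_bounds hc hℓ hP0 hopt.2 hstrict hzhat
  set δ : ℝ := 1/(2*(n:ℝ)) with hδdef
  have hδ0 : 0 < δ := by rw [hδdef]; positivity
  have hδhalf : δ ≤ 1/2 := by
    rw [hδdef, div_le_div_iff₀ (by positivity) (by norm_num)]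
    nlinarith
  refine ⟨mixW E, etaSeq, (fun t j k => mixW_nonneg hn E t j k),
    (fun t j => mixW_row_sum E t j), (fun t k => mixW_col_sum E hEsym t k), ?_,
    (fun t => (etaSeq_pos t).le), etaSeq_sum_tendsto, etaSeq_sq_summable, ?_⟩
  · intro t j k hkj hjk
    exact mixW_zero E t k j hkj (fun h => hjk (hEsym t k j h))
  intro θ hθ p hpbd hpsum x hx
  choose Mp hMp using hpbd
  -- matrix properties
  have hRS : ∀ t, RowStoch (mixW E t) :=
    fun t => ⟨mixW_nonneg hn E t, mixW_row_sum E t⟩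
  have hdiag : ∀ t j, δ ≤ mixW E t j j := by
    intro t j
    rw [hδdef]
    exact mixW_delta_le_diag hn E t j
  have hedge : ∀ (t : ℕ) (j k : Fin n), j ≠ k → ((j,k) ∈ E t ∨ (k,j) ∈ E t) →
      δ ≤ mixW E t j k := by
    intro t j k hjk h
    have hmem : (j,k) ∈ E t := by
      rcases h with h | h
      · exact h
      · exact hEsym t k j h
    rw [mixW_edge E t j k hjk hmem, hδdef]
  -- dynamics in perturbed-consensus form
  set g : ℕ → Fin n → ℝ := fun t j =>
    ∑ i ∈ Finset.univ.filter (fun i => R i = j), ℓ i * rampW c (x t j - C i) with hg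
  set u : ℕ → Fin n → ℝ := fun t j => -(etaSeq t * (g t j - p j t)) with hu
  have hx' : ∀ t j, x (t+1) j
      = (∑ k, mixW E t j k * x t k) - etaSeq t * (g t j - p j t) := by
    intro t j
    simp only [hg]
    exact hx t j
  have hdyn : ∀ t j, x (t+1) j = (mixW E t).mulVec (x t) j + u t j := by
    intro t j
    have hmv : (mixW E t).mulVec (x t) j = ∑ k, mixW E t j k * x t k := by
      simp [Matrix.mulVec, dotProduct]
    rw [hmv, hx' t j]
    simp only [hu]
    ring
  -- bounds
  set Ltot := ∑ i, ℓ i with hLt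
  have hLtot0 : 0 < Ltot := Finset.sum_pos (fun i _ => hℓ i) Finset.univ_nonempty
  have hgbd : ∀ t j, 0 ≤ g t j ∧ g t j ≤ Ltot := by
    intro t j
    constructor
    · exact reg_sccf_nonneg ℓ C c hc hℓ _ _
    · calc g t j ≤ ∑ i ∈ Finset.univ.filter (fun i => R i = j), ℓ i :=
            reg_sccf_le ℓ C c hc hℓ _ _
        _ ≤ Ltot := Finset.sum_le_sum_of_subset_of_nonneg
            (Finset.filter_subset _ _) (fun i _ _ => (hℓ i).le)
  set MP := ∑ j, |Mp j| with hMP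
  have hMP0 : 0 ≤ MP := Finset.sum_nonneg fun j _ => abs_nonneg _
  have hpbd' : ∀ (j : Fin n) (t : ℕ), |p j t| ≤ MP := by
    intro j t
    refine le_trans (hMp j t) (le_trans (le_abs_self _) ?_)
    exact Finset.single_le_sum (fun j _ => abs_nonneg (Mp j)) (Finset.mem_univ j)
  set D := Ltot + MP with hD
  have hD0 : 0 < D := by rw [hD]; linarith
  set b := fun t => etaSeq t * D with hb_def
  have hb : ∀ t j, |u t j| ≤ b t := by
    intro t j
    have h2 := (hgbd t j).1
    have h3 := (hgbd t j).2
    have h4 := abs_le.mp (hpbd' j t)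
    have h1 : |g t j - p j t| ≤ D := by
      rw [abs_le, hD]
      constructor <;> linarith [h4.1, h4.2]
    calc |u t j| = etaSeq t * |g t j - p j t| := by
          rw [hu]
          simp only [abs_neg, abs_mul, abs_of_pos (etaSeq_pos t)]
      _ ≤ etaSeq t * D := mul_le_mul_of_nonneg_left h1 (etaSeq_pos t).le
      _ = b t := by rw [hb_def]
  have hb0 : ∀ t, 0 ≤ b t := fun t => mul_nonneg (etaSeq_pos t).le hD0.le
  have hbsmall : ∀ ε > 0, ∃ M, ∀ t ≥ M, b t ≤ ε := by
    intro ε hε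
    obtain ⟨M, hM⟩ := etaSeq_small (ε/D) (div_pos hε hD0)
    refine ⟨M, fun t ht => ?_⟩
    calc b t = etaSeq t * D := by rw [hb_def]
      _ ≤ (ε/D) * D := mul_le_mul_of_nonneg_right (hM t ht) hD0.le
      _ = ε := div_mul_cancel₀ ε hD0.ne'
  have hcons := consensus_decay hn hne hRS hδ0 hδhalf hdiag hedge hB hconn hdyn hb hb0 hbsmall
  -- the average dynamics
  set ybar := fun t => (∑ j, x t j) / n with hybar
  have hsum_rec : ∀ t, ∑ j, x (t+1) j
      = (∑ j, x t j) - etaSeq t * ((∑ j, g t j) - (∑ j, p j t)) := by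
    intro t
    calc ∑ j, x (t+1) j
        = ∑ j, ((∑ k, mixW E t j k * x t k) - etaSeq t * (g t j - p j t)) :=
          Finset.sum_congr rfl (fun j _ => hx' t j)
      _ = (∑ j, ∑ k, mixW E t j k * x t k) - ∑ j, etaSeq t * (g t j - p j t) :=
          (Finset.sum_sub_distrib ..)
      _ = (∑ j, x t j) - etaSeq t * ((∑ j, g t j) - (∑ j, p j t)) := by
          have hcol : ∑ j, ∑ k, mixW E t j k * x t k = ∑ k, x t k := by
            rw [Finset.sum_comm]
            calc ∑ k, ∑ j, mixW E t j k * x t k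
                = ∑ k, (∑ j, mixW E t j k) * x t k := by
                  apply Finset.sum_congr rfl
                  intro k _
                  rw [Finset.sum_mul]
              _ = ∑ k, x t k := by
                  apply Finset.sum_congr rfl
                  intro k _
                  rw [mixW_col_sum E hEsym t k, one_mul]
          rw [hcol, ← Finset.mul_sum, Finset.sum_sub_distrib, mul_sub]
  have hybar_rec : ∀ t, ybar (t+1)
      = ybar t - (etaSeq t / n) * ((∑ j, g t j) - (∑ j, p j t)) := by
    intro t
    simp only [hybar]
    rw [hsum_rec t]
    field_simp
  set X : ℕ → ℝ := fun t => (sccf ℓ C c (ybar t) - P)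
    + ((∑ j, g t j) - sccf ℓ C c (ybar t)) - ((∑ j, p j t) - P) with hXdef
  have hkey : ∀ t, ybar (t+1) = ybar t - (etaSeq t / n) * X t := by
    intro t
    simp only [hXdef]
    rw [hybar_rec t]
    ring
  -- H approximates sccf at the average
  have hHapprox : ∀ t, |(∑ j, g t j) - sccf ℓ C c (ybar t)|
      ≤ (Ltot/c) * sprd hne (x t) := by
    intro t
    have hFib : sccf ℓ C c (ybar t)
        = ∑ j, ∑ i ∈ Finset.univ.filter (fun i => R i = j),
            ℓ i * rampW c (ybar t - C i) := by
      unfold sccf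
      exact (Finset.sum_fiberwise Finset.univ R
        (fun i => ℓ i * rampW c (ybar t - C i))).symm
    rw [hFib, ← Finset.sum_sub_distrib]
    calc |∑ j, (g t j - ∑ i ∈ Finset.univ.filter (fun i => R i = j),
            ℓ i * rampW c (ybar t - C i))|
        ≤ ∑ j, |g t j - ∑ i ∈ Finset.univ.filter (fun i => R i = j),
            ℓ i * rampW c (ybar t - C i)| := Finset.abs_sum_le_sum_abs _ _
      _ ≤ ∑ j, (∑ i ∈ Finset.univ.filter (fun i => R i = j), ℓ i)
            * sprd hne (x t) / c := by
          apply Finset.sum_le_sum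
          intro j _
          have hlip := sccf_lipschitz ℓ C c hc hℓ
            (Finset.univ.filter (fun i => R i = j)) (x t j) (ybar t)
          have habs : |x t j - ybar t| ≤ sprd hne (x t) := by
            simpa only [hybar] using abs_sub_avg_le hn hne (x t) j
          have hLj : (0:ℝ) ≤ ∑ i ∈ Finset.univ.filter (fun i => R i = j), ℓ i :=
            Finset.sum_nonneg fun i _ => (hℓ i).le
          calc |g t j - ∑ i ∈ Finset.univ.filter (fun i => R i = j),
                  ℓ i * rampW c (ybar t - C i)|
              ≤ (∑ i ∈ Finset.univ.filter (fun i => R i = j), ℓ i)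
                  * |x t j - ybar t| / c := by
                simpa only [hg] using hlip
            _ ≤ (∑ i ∈ Finset.univ.filter (fun i => R i = j), ℓ i)
                  * sprd hne (x t) / c := by
                apply div_le_div_of_nonneg_right ?_ hc.le
                exact mul_le_mul_of_nonneg_left habs hLj
      _ = (Ltot/c) * sprd hne (x t) := by
          rw [← Finset.sum_div, ← Finset.sum_mul,
            Finset.sum_fiberwise Finset.univ R (fun i => ℓ i), ← hLt,
            div_mul_eq_mul_div]
  -- scalar convergence claim
  set ε0 := min (zhat - (zstar - c)) (zstar - zhat) with hε0
  have hε00 : 0 < ε0 := lt_min (by linarith) (by linarith)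
  have hFbd : ∀ y : ℝ, 0 ≤ sccf ℓ C c y ∧ sccf ℓ C c y ≤ Ltot := by
    intro y
    constructor
    · exact reg_sccf_nonneg ℓ C c hc hℓ Finset.univ y
    · exact reg_sccf_le ℓ C c hc hℓ Finset.univ y
  have claimA : ∀ ε : ℝ, 0 < ε → ε ≤ ε0 → ∃ T, ∀ t, T ≤ t → |ybar t - zhat| ≤ ε := by
    intro ε hε hεle
    have hεle1 : ε ≤ zhat - (zstar - c) := le_trans hεle (min_le_left _ _)
    have hεle2 : ε ≤ zstar - zhat := le_trans hεle (min_le_right _ _)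
    set m := ℓ i0 * (ε/(2*c)) with hm
    have hm0 : 0 < m := mul_pos (hℓ i0) (div_pos hε (by linarith))
    have drift_up : ∀ y, zhat + ε/2 ≤ y → P + m ≤ sccf ℓ C c y := by
      intro y hy
      rcases le_or_gt y zstar with hcase | hcase
      · have hs := sccf_slope hc hℓ hP0 hopt.2 hstrict hi0
          (a := zhat) (b := y) (by linarith) (by linarith) hcase
        have h1 : m ≤ ℓ i0 * ((y - zhat)/c) := by
          apply mul_le_mul_of_nonneg_left _ (hℓ i0).le
          rw [div_le_div_iff₀ (by linarith) hc]
          nlinarith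
        rw [hzhat] at hs
        linarith
      · have hs := sccf_slope hc hℓ hP0 hopt.2 hstrict hi0
          (a := zhat) (b := zstar) (by linarith) (by linarith) le_rfl
        have hmono := sccf_mono ℓ C c hc hℓ hcase.le
        have h1 : m ≤ ℓ i0 * ((zstar - zhat)/c) := by
          apply mul_le_mul_of_nonneg_left _ (hℓ i0).le
          rw [div_le_div_iff₀ (by linarith) hc]
          nlinarith
        rw [hzhat] at hs
        linarith
    have drift_dn : ∀ y, y ≤ zhat - ε/2 → sccf ℓ C c y ≤ P - m := by
      intro y hy
      rcases le_or_gt (zstar - c) y with hcase | hcase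
      · have hs := sccf_slope hc hℓ hP0 hopt.2 hstrict hi0
          (a := y) (b := zhat) hcase (by linarith) (by linarith)
        have h1 : m ≤ ℓ i0 * ((zhat - y)/c) := by
          apply mul_le_mul_of_nonneg_left _ (hℓ i0).le
          rw [div_le_div_iff₀ (by linarith) hc]
          nlinarith
        rw [hzhat] at hs
        linarith
      · have hs := sccf_slope hc hℓ hP0 hopt.2 hstrict hi0
          (a := zstar - c) (b := zhat) le_rfl (by linarith) (by linarith)
        have hmono := sccf_mono ℓ C c hc hℓ hcase.le
        have h1 : m ≤ ℓ i0 * ((zhat - (zstar - c))/c) := by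
          apply mul_le_mul_of_nonneg_left _ (hℓ i0).le
          rw [div_le_div_iff₀ (by linarith) hc]
          nlinarith
        rw [hzhat] at hs
        linarith
    -- small error regime
    have hAc : (0:ℝ) < Ltot/c := div_pos hLtot0 hc
    obtain ⟨Ts, hTs⟩ := hcons ((m/4) / (Ltot/c + 1)) (div_pos (by linarith) (by linarith))
    have hθ1 : (0:ℝ) < θ + 1 := by linarith
    have hLm1 : (0:ℝ) < Ltot + m + 1 := by linarith
    obtain ⟨Tη, hTη⟩ := etaSeq_small (min ((m/4)/(θ+1)) ((ε/2) * n / (Ltot + m + 1)))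
      (lt_min (div_pos (by linarith) hθ1) (div_pos (mul_pos (by linarith) hnpos) hLm1))
    set T1 := max Ts Tη with hT1def
    have hsprd_sm : ∀ t, T1 ≤ t → (Ltot/c) * sprd hne (x t) ≤ m/4 := by
      intro t ht
      have h1 := hTs t (le_trans (le_max_left _ _) ht)
      have h3 : (Ltot/c) * sprd hne (x t) ≤ (Ltot/c) * ((m/4) / (Ltot/c + 1)) :=
        mul_le_mul_of_nonneg_left h1 hAc.le
      have heq : (Ltot/c) * ((m/4) / (Ltot/c + 1)) = ((Ltot/c) * (m/4)) / (Ltot/c + 1) := by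
        ring
      have h4 : ((Ltot/c) * (m/4)) / (Ltot/c + 1) ≤ m/4 := by
        rw [div_le_iff₀ (by linarith)]
        nlinarith
      rw [heq] at h3
      linarith
    have hθη_sm : ∀ t, T1 ≤ t → θ * etaSeq t ≤ m/4 := by
      intro t ht
      have h1 := le_trans (hTη t (le_trans (le_max_right _ _) ht)) (min_le_left _ _)
      have h2 : θ * etaSeq t ≤ θ * ((m/4)/(θ+1)) :=
        mul_le_mul_of_nonneg_left h1 hθ.le
      have heq : θ * ((m/4)/(θ+1)) = (θ * (m/4)) / (θ+1) := by ring
      have h4 : (θ * (m/4)) / (θ+1) ≤ m/4 := by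
        rw [div_le_iff₀ hθ1]
        nlinarith
      rw [heq] at h2
      linarith
    have he_sm : ∀ t, T1 ≤ t → |(∑ j, g t j) - sccf ℓ C c (ybar t)| ≤ m/4 :=
      fun t ht => le_trans (hHapprox t) (hsprd_sm t ht)
    have hd_sm : ∀ t, T1 ≤ t → |(∑ j, p j t) - P| ≤ m/4 :=
      fun t ht => le_trans (hpsum t) (hθη_sm t ht)
    have hstepb : ∀ t, T1 ≤ t → |ybar (t+1) - ybar t| ≤ ε/2 := by
      intro t ht
      have hee := abs_le.mp (he_sm t ht)
      have hdd := abs_le.mp (hd_sm t ht)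
      have hFb := hFbd (ybar t)
      have hXbd : |X t| ≤ Ltot + m := by
        simp only [hXdef]
        rw [abs_le]
        constructor <;> nlinarith [hFb.1, hFb.2, hee.1, hee.2, hdd.1, hdd.2, hm0]
      have hΔ : ybar (t+1) - ybar t = -((etaSeq t / n) * X t) := by
        rw [hkey t]
        ring
      rw [hΔ, abs_neg, abs_mul, abs_of_nonneg (div_nonneg (etaSeq_pos t).le hnpos.le)]
      have hηb := le_trans (hTη t (le_trans (le_max_right _ _) ht)) (min_le_right _ _)
      have hην : etaSeq t * (Ltot + m + 1) ≤ (ε/2) * n := by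
        rw [← le_div_iff₀ hLm1]
        exact hηb
      have h5 : etaSeq t / n * (Ltot + m) ≤ ε/2 := by
        rw [div_mul_eq_mul_div, div_le_iff₀ hnpos]
        have hη0 := (etaSeq_pos t).le
        nlinarith
      calc etaSeq t / n * |X t| ≤ etaSeq t / n * (Ltot + m) :=
            mul_le_mul_of_nonneg_left hXbd (div_nonneg (etaSeq_pos t).le hnpos.le)
        _ ≤ ε/2 := h5
    have hdown : ∀ t, T1 ≤ t → zhat + ε/2 ≤ ybar t → ybar (t+1) ≤ ybar t := by
      intro t ht hy
      have hdr := drift_up (ybar t) hy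
      have hee := abs_le.mp (he_sm t ht)
      have hdd := abs_le.mp (hd_sm t ht)
      have hX0 : 0 ≤ X t := by
        simp only [hXdef]
        linarith
      rw [hkey t]
      have h1 : 0 ≤ (etaSeq t / n) * X t := mul_nonneg (div_nonneg (etaSeq_pos t).le hnpos.le) hX0
      linarith
    have hdrift : ∀ t, T1 ≤ t → zhat + ε ≤ ybar t →
        ybar (t+1) ≤ ybar t - (m/(2*n)) * etaSeq t := by
      intro t ht hy
      have hdr := drift_up (ybar t) (by linarith)
      have hee := abs_le.mp (he_sm t ht)
      have hdd := abs_le.mp (hd_sm t ht)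
      have hX0 : m/2 ≤ X t := by
        simp only [hXdef]
        linarith
      rw [hkey t]
      have h1 : (etaSeq t / n) * (m/2) ≤ (etaSeq t / n) * X t :=
        mul_le_mul_of_nonneg_left hX0 (div_nonneg (etaSeq_pos t).le hnpos.le)
      have h2 : (etaSeq t / n) * (m/2) = (m/(2*n)) * etaSeq t := by
        field_simp
      linarith
    obtain ⟨T2, hT2⟩ := eventually_le_band zhat ε (m/(2*n)) hε (div_pos hm0 (by linarith))
      ybar T1 hstepb hdown hdrift
    have hstepb' : ∀ t, T1 ≤ t → |(-(ybar (t+1))) - (-(ybar t))| ≤ ε/2 := by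
      intro t ht
      rw [show -(ybar (t+1)) - -(ybar t) = -(ybar (t+1) - ybar t) by ring, abs_neg]
      exact hstepb t ht
    have hdown' : ∀ t, T1 ≤ t → -zhat + ε/2 ≤ -(ybar t) → -(ybar (t+1)) ≤ -(ybar t) := by
      intro t ht hy
      have hy' : ybar t ≤ zhat - ε/2 := by linarith
      have hdr := drift_dn (ybar t) hy'
      have hee := abs_le.mp (he_sm t ht)
      have hdd := abs_le.mp (hd_sm t ht)
      have hX0 : X t ≤ 0 := by
        simp only [hXdef]
        linarith
      have hk := hkey t
      have h1 : (etaSeq t / n) * X t ≤ 0 :=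
        mul_nonpos_of_nonneg_of_nonpos (div_nonneg (etaSeq_pos t).le hnpos.le) hX0
      have : ybar t ≤ ybar (t+1) := by rw [hk]; linarith
      linarith
    have hdrift' : ∀ t, T1 ≤ t → -zhat + ε ≤ -(ybar t) →
        -(ybar (t+1)) ≤ -(ybar t) - (m/(2*n)) * etaSeq t := by
      intro t ht hy
      have hy' : ybar t ≤ zhat - ε := by linarith
      have hdr := drift_dn (ybar t) (by linarith)
      have hee := abs_le.mp (he_sm t ht)
      have hdd := abs_le.mp (hd_sm t ht)
      have hX0 : X t ≤ -(m/2) := by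
        simp only [hXdef]
        linarith
      have hk := hkey t
      have h1 : (etaSeq t / n) * X t ≤ (etaSeq t / n) * (-(m/2)) :=
        mul_le_mul_of_nonneg_left hX0 (div_nonneg (etaSeq_pos t).le hnpos.le)
      have h2 : (etaSeq t / n) * (-(m/2)) = -((m/(2*n)) * etaSeq t) := by
        field_simp
      have h3 : ybar t + (m/(2*n)) * etaSeq t ≤ ybar (t+1) := by
        rw [hk]
        linarith
      linarith
    obtain ⟨T3, hT3⟩ := eventually_le_band (-zhat) ε (m/(2*n)) hε (div_pos hm0 (by linarith))
      (fun t => -(ybar t)) T1 hstepb' hdown' hdrift'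
    refine ⟨max T2 T3, fun t ht => ?_⟩
    have h1 := hT2 t (le_trans (le_max_left _ _) ht)
    have h2 := hT3 t (le_trans (le_max_right _ _) ht)
    rw [abs_le]
    constructor <;> linarith
  -- final assembly
  obtain ⟨TA, hTA⟩ := claimA (ε0/3) (by linarith) (by linarith)
  obtain ⟨TS, hTS⟩ := hcons (ε0/3) (by linarith)
  refine ⟨max TA TS, ?_⟩
  intro t ht j
  have h1 := hTA t (le_trans (le_max_left _ _) ht)
  have h2 := hTS t (le_trans (le_max_right _ _) ht)
  have h3 : |x t j - ybar t| ≤ sprd hne (x t) := by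
    simpa only [hybar] using abs_sub_avg_le hn hne (x t) j
  have h4 : |x t j - zhat| ≤ 2*ε0/3 := by
    calc |x t j - zhat| ≤ |x t j - ybar t| + |ybar t - zhat| := abs_sub_le _ _ _
      _ ≤ ε0/3 + ε0/3 := add_le_add (le_trans h3 h2) h1
      _ = 2*ε0/3 := by ring
  have h5 := abs_le.mp h4
  have hε01 : ε0 ≤ zhat - (zstar - c) := min_le_left _ _
  have hε02 : ε0 ≤ zstar - zhat := min_le_right _ _
  have hxlow : zstar - c < x t j := by linarith
  have hxhigh : x t j < zstar := by linarith
  have hiff : ∀ i, (x t j ≤ C i ↔ zhat ≤ C i) := by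
    intro i
    rcases le_or_gt zstar (C i) with hca | hca
    · constructor
      · intro _
        linarith
      · intro _
        linarith
    · have hgap' : C i ≤ zstar - c := by
        have hlt : C i < C i0 := by rw [hi0]; exact hca
        have hgg := hgap i0 i hlt
        rw [hi0] at hgg
        linarith
      constructor
      · intro h
        linarith
      · intro h
        linarith
  have hseteq : Finset.univ.filter (fun i => R i = j ∧ x t j ≤ C i)
      = Finset.univ.filter (fun i => R i = j ∧ zhat ≤ C i) := by
    apply Finset.filter_congr
    intro i _
    simp only [hiff i]
  refine ⟨hseteq, ?_⟩
  intro hne1 hne2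
  exact Finset.inf'_congr hne1 hseteq (fun i _ => rfl)
end

section
/- Suppose z* is an optimal threshold for P with f(z*) > P, the constant c > 0 satisfies the gap condition, and ẑ ∈ ℝ satisfies f̂(ẑ) = P. Let x : ℕ → ℝ be any sequence with lim_{t→∞} x(t) = ẑ. Then there exists T ∈ ℕ such that for all t ≥ T and all i ∈ I, C_i ≥ x(t) if and only if C_i ≥ ẑ; consequently, for every subset L' ⊆ I and all t ≥ T, the set {i ∈ L' : C_i ≥ x(t)} equals {i ∈ L' : C_i ≥ ẑ}. -/
lemma ccf_mono {I : Type*} [Fintype I] (ℓ C : I → ℝ) (hℓ : ∀ i, 0 < ℓ i)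
    {z z' : ℝ} (h : z ≤ z') : ccf ℓ C z ≤ ccf ℓ C z' := by
  apply Finset.sum_le_sum_of_subset_of_nonneg
  · intro i hi
    simp only [Finset.mem_filter, Finset.mem_univ, true_and] at hi ⊢
    exact hi.trans h
  · intro i _ _; exact (hℓ i).le

lemma sccf_at_crit {I : Type*} [Fintype I] (ℓ C : I → ℝ) {c : ℝ} (hc : 0 < c)
    (hgap : GapCond C c) (i : I) : sccf ℓ C c (C i) = ccf ℓ C (C i) := by
  unfold sccf ccf
  rw [Finset.sum_filter]
  apply Finset.sum_congr rfl
  intro j _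
  by_cases h : C j ≤ C i
  · have h0 : (0:ℝ) ≤ C i - C j := by linarith
    simp [rampW, h0, h]
  · push_neg at h
    have hg := hgap j i h
    have h0 : ¬ (0:ℝ) ≤ C i - C j := by linarith
    by_cases h1 : -c ≤ C i - C j
    · have : C i - C j = -c := by linarith
      rw [if_neg (not_le.mpr h)]
      simp only [rampW, if_neg h0, if_pos h1, this]
      rw [neg_div, div_self hc.ne']
      rw [if_neg (by linarith : ¬ (0:ℝ) ≤ -c), if_pos le_rfl]
      ring
    · simp [rampW, h0, h1, not_le.mpr h]

/-- If `x(t) → ẑ` where `f̂(ẑ) = P`, `z*` is an optimal threshold with `f(z*) > P`,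
and `c` satisfies the gap condition, then eventually the set of loads with
criticality at least `x(t)` coincides with the set of loads with criticality at
least `ẑ`, within any subset `L'` of loads. -/
theorem threshold_sets_stabilize
    {I : Type*} [Fintype I] [Nonempty I] (ℓ C : I → ℝ)
    (hℓ : ∀ i, 0 < ℓ i) (hC : ∀ i, C i ∈ Set.Icc (0 : ℝ) 1)
    (P zstar : ℝ) (hopt : OptThresh ℓ C P zstar)
    (hstrict : P < ccf ℓ C zstar)
    (c : ℝ) (hc : 0 < c) (hgap : GapCond C c)
    (zhat : ℝ) (hzhat : sccf ℓ C c zhat = P)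
    (x : ℕ → ℝ) (hx : Filter.Tendsto x Filter.atTop (nhds zhat)) :
    ∃ T : ℕ, ∀ t, T ≤ t →
      (∀ i : I, x t ≤ C i ↔ zhat ≤ C i) ∧
      (∀ L' : Finset I,
        L'.filter (fun i => x t ≤ C i) = L'.filter (fun i => zhat ≤ C i)) := by
  -- zhat is not equal to any criticality value
  have hne : ∀ i : I, C i ≠ zhat := by
    intro i hi
    have h1 : ccf ℓ C zhat = P := by
      rw [← hi] at hzhat ⊢
      rw [← sccf_at_crit ℓ C hc hgap i, hzhat]
    have h2 : zstar ≤ zhat := by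
      by_contra h
      push_neg at h
      exact absurd h1 (ne_of_lt (hopt.2 zhat h))
    have := ccf_mono ℓ C hℓ h2
    linarith
  -- minimal distance
  set ε : ℝ := Finset.univ.inf' Finset.univ_nonempty (fun i => |C i - zhat|) with hε
  have hεpos : 0 < ε := by
    rw [hε, Finset.lt_inf'_iff]
    intro i _
    exact abs_pos.mpr (sub_ne_zero.mpr (hne i))
  have hεle : ∀ i : I, ε ≤ |C i - zhat| := fun i =>
    Finset.inf'_le _ (Finset.mem_univ i)
  have hev : ∀ᶠ t in Filter.atTop, x t ∈ Metric.ball zhat ε :=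
    hx.eventually (Metric.ball_mem_nhds zhat hεpos)
  obtain ⟨T, hT⟩ := Filter.eventually_atTop.mp hev
  refine ⟨T, fun t ht => ?_⟩
  have hxt : |x t - zhat| < ε := by
    have := hT t ht
    rwa [Metric.mem_ball, Real.dist_eq] at this
  have key : ∀ i : I, x t ≤ C i ↔ zhat ≤ C i := by
    intro i
    rcases lt_or_gt_of_ne (hne i) with h | h
    · -- C i < zhat : both sides false
      have hεi := hεle i
      rw [abs_of_neg (by linarith)] at hεi
      have hab := abs_lt.mp hxt
      constructor
      · intro hx'; linarith
      · intro hz; linarith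
    · have hεi := hεle i
      rw [abs_of_pos (by linarith)] at hεi
      have hab := abs_lt.mp hxt
      constructor
      · intro _; linarith
      · intro _; linarith
  exact ⟨key, fun L' => Finset.filter_congr (fun i _ => by simp [key i])⟩
end

section
/- Let n ≥ 1 and for each j ∈ {1,…,n} let h_j : ℝ × ℕ → ℝ. Assume: (i) there is M > 0 with |h_j(z,t)| ≤ M for all j, z, t; (ii) there is λ > 0 with |h_j(z,t) − h_j(z',t)| ≤ λ|z − z'| for all j, t and all z, z' ∈ ℝ; (iii) there exist a function H : ℝ → ℝ and θ > 0 such that |(1/n)∑_{j=1}^n h_j(z,t) − H(z)| ≤ θ η(t) for all z ∈ ℝ and all t; (iv) there exists z⋆ ∈ ℝ with (z − z⋆)H(z) ≥ 0 for all z ∈ ℝ; (v) the step sizes satisfy η(t) ≥ 0 for all t, ∑_{t=0}^∞ η(t) = ∞ and ∑_{t=0}^∞ η(t)² < ∞; (vi) W(t) is an n×n doubly stochastic matrix for every t, and x : ℕ → ℝⁿ satisfies x(t+1) = W(t)x(t) − η(t)y(t) with y_j(t) = h_j(x_j(t), t); (vii) there is ν > 0 such that |x_i(t) − x̄(t)|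 ≤ ν η(t) for all i ∈ {1,…,n} and all t, where x̄(t) = (1/n)∑_{i=1}^n x_i(t). Then there exists z' ∈ ℝ with H(z') = 0 such that lim_{t→∞} x_i(t) = z' for every i ∈ {1,…,n}. -/
open Filter

lemma one_le_prod_one_add (b : ℕ → ℝ) (hb : ∀ t, 0 ≤ b t) (t : ℕ) :
    (1:ℝ) ≤ ∏ s ∈ Finset.range t, (1 + b s) := by
  calc (1:ℝ) = ∏ s ∈ Finset.range t, 1 := by simp
    _ ≤ _ := Finset.prod_le_prod (by intros; norm_num) (by intro s _; linarith [hb s])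

lemma bounded_of_rec (a b c : ℕ → ℝ)
    (ha0 : 0 ≤ a 0) (hb : ∀ t, 0 ≤ b t) (hc : ∀ t, 0 ≤ c t)
    (hrec : ∀ t, a (t+1) ≤ a t * (1 + b t) + c t)
    (hB : Summable b) (hC : Summable c) :
    ∀ t, a t ≤ (a 0 + ∑' s, c s) * Real.exp (∑' s, b s) := by
  have hCnn : 0 ≤ ∑' s, c s := tsum_nonneg hc
  have main : ∀ t, a t ≤ (a 0 + ∑ s ∈ Finset.range t, c s) *
      ∏ s ∈ Finset.range t, (1 + b s) := by
    intro t
    induction t with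
    | zero => simp
    | succ t ih =>
      have hprodpos := one_le_prod_one_add b hb t
      have hsumnn : 0 ≤ ∑ s ∈ Finset.range t, c s :=
        Finset.sum_nonneg fun s _ => hc s
      have hbt : (0:ℝ) ≤ 1 + b t := by linarith [hb t]
      have h2 : a t * (1 + b t) ≤ ((a 0 + ∑ s ∈ Finset.range t, c s) *
          ∏ s ∈ Finset.range t, (1 + b s)) * (1 + b t) :=
        mul_le_mul_of_nonneg_right ih hbt
      have hQ : (1:ℝ) ≤ (∏ s ∈ Finset.range t, (1 + b s)) * (1 + b t) := by
        have := mul_le_mul_of_nonneg_right hprodpos hbt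
        have hbt1 := hb t
        linarith
      have h3 : c t ≤ c t * ((∏ s ∈ Finset.range t, (1 + b s)) * (1 + b t)) :=
        le_mul_of_one_le_right (hc t) hQ
      rw [Finset.prod_range_succ, Finset.sum_range_succ]
      calc a (t+1) ≤ a t * (1 + b t) + c t := hrec t
        _ ≤ ((a 0 + ∑ s ∈ Finset.range t, c s) * ∏ s ∈ Finset.range t, (1 + b s)) * (1 + b t)
            + c t * ((∏ s ∈ Finset.range t, (1 + b s)) * (1 + b t)) := by linarith
        _ = (a 0 + (∑ s ∈ Finset.range t, c s + c t)) *
            ((∏ s ∈ Finset.range t, (1 + b s)) * (1 + b t)) := by ring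
  intro t
  have h4 : ∏ s ∈ Finset.range t, (1 + b s) ≤ Real.exp (∑' s, b s) := by
    calc ∏ s ∈ Finset.range t, (1 + b s)
        ≤ ∏ s ∈ Finset.range t, Real.exp (b s) :=
          Finset.prod_le_prod (fun s _ => by linarith [hb s])
            (fun s _ => (by linarith [Real.add_one_le_exp (b s)]))
      _ = Real.exp (∑ s ∈ Finset.range t, b s) := (Real.exp_sum _ _).symm
      _ ≤ Real.exp (∑' s, b s) := Real.exp_le_exp.2 (Summable.sum_le_tsum _ (fun s _ => hb s) hB)
  have h5 : a 0 + ∑ s ∈ Finset.range t, c s ≤ a 0 + ∑' s, c s := by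
    gcongr
    exact Summable.sum_le_tsum _ (fun s _ => hc s) hC
  have h6 := one_le_prod_one_add b hb t
  calc a t ≤ (a 0 + ∑ s ∈ Finset.range t, c s) * ∏ s ∈ Finset.range t, (1 + b s) := main t
    _ ≤ (a 0 + ∑' s, c s) * Real.exp (∑' s, b s) := by
        apply mul_le_mul h5 h4 (by linarith) (by linarith)

set_option maxHeartbeats 2000000 in
/-- Proposition 1 of the paper: distributed root finding. Under uniform boundedness
and Lipschitzness of the local functions `h_j`, the sign condition on the average
limit function `H`, step sizes that are non-summable but square-summable, doubly
stochastic mixing matrices, and the consensus-rate estimate, every local iterate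
converges to a common root of `H`. -/
theorem distributed_root_finding
    (n : ℕ) (hn : 1 ≤ n)
    (h : Fin n → ℝ → ℕ → ℝ) (H : ℝ → ℝ) (η : ℕ → ℝ)
    (M : ℝ) (hM : 0 < M) (hbd : ∀ (j : Fin n) (z : ℝ) (t : ℕ), |h j z t| ≤ M)
    (lam : ℝ) (hlam : 0 < lam)
    (hLip : ∀ (j : Fin n) (t : ℕ) (z z' : ℝ), |h j z t - h j z' t| ≤ lam * |z - z'|)
    (θ : ℝ) (hθ : 0 < θ)
    (happrox : ∀ (z : ℝ) (t : ℕ),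
      |(1 / (n : ℝ)) * (∑ j, h j z t) - H z| ≤ θ * η t)
    (zstar : ℝ) (hsign : ∀ z : ℝ, 0 ≤ (z - zstar) * H z)
    (hη : ∀ t, 0 ≤ η t)
    (hηdiv : Tendsto (fun T => ∑ t ∈ Finset.range T, η t) atTop atTop)
    (hηsq : Summable fun t => (η t) ^ 2)
    (W : ℕ → Matrix (Fin n) (Fin n) ℝ)
    (hWnn : ∀ (t : ℕ) (j k : Fin n), 0 ≤ W t j k)
    (hWrow : ∀ (t : ℕ) (j : Fin n), ∑ k, W t j k = 1)
    (hWcol : ∀ (t : ℕ) (k : Fin n), ∑ j, W t j k = 1)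
    (x : ℕ → Fin n → ℝ)
    (hx : ∀ (t : ℕ) (j : Fin n),
      x (t + 1) j = (∑ k, W t j k * x t k) - η t * h j (x t j) t)
    (ν : ℝ) (hν : 0 < ν)
    (hcons : ∀ (t : ℕ) (i : Fin n),
      |x t i - (1 / (n : ℝ)) * ∑ k, x t k| ≤ ν * η t) :
    ∃ z' : ℝ, H z' = 0 ∧
      ∀ i : Fin n, Tendsto (fun t => x t i) atTop (nhds z') := by
  have hn0 : (0:ℝ) < (n:ℝ) := by exact_mod_cast Nat.pos_of_ne_zero (by omega)
  have hninv : (1/(n:ℝ)) * (n:ℝ) = 1 := by field_simp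
  set xb : ℕ → ℝ := fun t => (1/(n:ℝ)) * ∑ k, x t k with hxbdef
  set g : ℕ → ℝ := fun t => (1/(n:ℝ)) * ∑ j, h j (x t j) t with hgdef
  -- (A) evolution of the average
  have hxbrec : ∀ t, xb (t+1) = xb t - η t * g t := by
    intro t
    have key : ∑ j, ∑ k, W t j k * x t k = ∑ k, x t k := by
      rw [Finset.sum_comm]
      refine Finset.sum_congr rfl fun k _ => ?_
      rw [← Finset.sum_mul, hWcol, one_mul]
    simp only [hxbdef, hgdef]
    calc (1/(n:ℝ)) * ∑ k, x (t+1) k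
        = (1/(n:ℝ)) * ∑ j, ((∑ k, W t j k * x t k) - η t * h j (x t j) t) := by
          congr 1
          exact Finset.sum_congr rfl fun j _ => hx t j
      _ = (1/(n:ℝ)) * ((∑ j, ∑ k, W t j k * x t k) - η t * ∑ j, h j (x t j) t) := by
          rw [Finset.sum_sub_distrib, Finset.mul_sum]
      _ = (1/(n:ℝ)) * ∑ k, x t k - η t * ((1/(n:ℝ)) * ∑ j, h j (x t j) t) := by
          rw [key]; ring
  -- (C) |g t| ≤ M
  have hgbd : ∀ t, |g t| ≤ M := by
    intro t
    have h1 : |∑ j, h j (x t j) t| ≤ (n:ℝ) * M := by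
      calc |∑ j, h j (x t j) t| ≤ ∑ j : Fin n, |h j (x t j) t| :=
            Finset.abs_sum_le_sum_abs _ _
        _ ≤ ∑ _j : Fin n, M := Finset.sum_le_sum fun j _ => hbd j _ t
        _ = (n:ℝ) * M := by simp [Finset.sum_const, mul_comm]
    have : |g t| = (1/(n:ℝ)) * |∑ j, h j (x t j) t| := by
      rw [hgdef, abs_mul, abs_of_nonneg (by positivity)]
    rw [this]
    calc (1/(n:ℝ)) * |∑ j, h j (x t j) t| ≤ (1/(n:ℝ)) * ((n:ℝ) * M) := by
          apply mul_le_mul_of_nonneg_left h1 (by positivity)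
      _ = M := by field_simp
  -- (B) |g t − H (xb t)| ≤ C η t
  set C : ℝ := lam * ν + θ with hCdef
  have hC0 : 0 < C := by positivity
  have hgH : ∀ t, |g t - H (xb t)| ≤ C * η t := by
    intro t
    have hsplit : g t - H (xb t) = (1/(n:ℝ)) * (∑ j, (h j (x t j) t - h j (xb t) t))
        + ((1/(n:ℝ)) * (∑ j, h j (xb t) t) - H (xb t)) := by
      rw [hgdef, Finset.sum_sub_distrib]
      push_cast
      ring
    have h1 : |(1/(n:ℝ)) * (∑ j, (h j (x t j) t - h j (xb t) t))| ≤ lam * ν * η t := by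
      rw [abs_mul, abs_of_nonneg (show (0:ℝ) ≤ 1/(n:ℝ) by positivity)]
      have h2 : |∑ j, (h j (x t j) t - h j (xb t) t)| ≤ (n:ℝ) * (lam * (ν * η t)) := by
        calc |∑ j, (h j (x t j) t - h j (xb t) t)|
            ≤ ∑ j : Fin n, |h j (x t j) t - h j (xb t) t| := Finset.abs_sum_le_sum_abs _ _
          _ ≤ ∑ j : Fin n, lam * (ν * η t) := by
              refine Finset.sum_le_sum fun j _ => ?_
              calc |h j (x t j) t - h j (xb t) t| ≤ lam * |x t j - xb t| := hLip j t _ _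
                _ ≤ lam * (ν * η t) := by
                    have := hcons t j
                    exact mul_le_mul_of_nonneg_left this hlam.le
          _ = (n:ℝ) * (lam * (ν * η t)) := by simp [Finset.sum_const, mul_comm]
      calc (1/(n:ℝ)) * |∑ j, (h j (x t j) t - h j (xb t) t)|
          ≤ (1/(n:ℝ)) * ((n:ℝ) * (lam * (ν * η t))) :=
            mul_le_mul_of_nonneg_left h2 (by positivity)
        _ = lam * ν * η t := by field_simp
    have h2 := happrox (xb t) t
    calc |g t - H (xb t)| ≤ |(1/(n:ℝ)) * (∑ j, (h j (x t j) t - h j (xb t) t))|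
          + |(1/(n:ℝ)) * (∑ j, h j (xb t) t) - H (xb t)| := by
          rw [hsplit]; exact abs_add_le _ _
      _ ≤ lam * ν * η t + θ * η t := add_le_add h1 h2
      _ = C * η t := by rw [hCdef]; ring
  -- η → 0
  have hη0 : Tendsto η atTop (nhds 0) := by
    have h1 : Tendsto (fun t => (η t)^2) atTop (nhds 0) := hηsq.tendsto_atTop_zero
    have h2 : Tendsto (fun t => Real.sqrt ((η t)^2)) atTop (nhds 0) := by
      have := (Real.continuous_sqrt.tendsto 0).comp h1
      simpa [Function.comp_def] using this
    refine h2.congr fun t => ?_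
    rw [Real.sqrt_sq (hη t)]
  -- H is Lipschitz
  have hHLip : ∀ z z', |H z - H z'| ≤ lam * |z - z'| := by
    intro z z'
    have key : ∀ t, |H z - H z'| ≤ lam * |z - z'| + 2*θ*η t := by
      intro t
      have a1 := happrox z t
      have a2 := happrox z' t
      have a3 : |(1/(n:ℝ)) * (∑ j, h j z t) - (1/(n:ℝ)) * (∑ j, h j z' t)|
          ≤ lam * |z - z'| := by
        rw [← mul_sub, ← Finset.sum_sub_distrib, abs_mul,
          abs_of_nonneg (show (0:ℝ) ≤ 1/(n:ℝ) by positivity)]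
        have h2 : |∑ j, (h j z t - h j z' t)| ≤ (n:ℝ) * (lam * |z - z'|) := by
          calc |∑ j, (h j z t - h j z' t)| ≤ ∑ j : Fin n, |h j z t - h j z' t| :=
                Finset.abs_sum_le_sum_abs _ _
            _ ≤ ∑ _j : Fin n, lam * |z - z'| := Finset.sum_le_sum fun j _ => hLip j t z z'
            _ = (n:ℝ) * (lam * |z - z'|) := by simp [Finset.sum_const, mul_comm]
        calc (1/(n:ℝ)) * |∑ j, (h j z t - h j z' t)|
            ≤ (1/(n:ℝ)) * ((n:ℝ) * (lam * |z - z'|)) :=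
              mul_le_mul_of_nonneg_left h2 (by positivity)
          _ = lam * |z - z'| := by field_simp
      calc |H z - H z'| = |(H z - (1/(n:ℝ)) * (∑ j, h j z t))
            + ((1/(n:ℝ)) * (∑ j, h j z t) - (1/(n:ℝ)) * (∑ j, h j z' t))
            + ((1/(n:ℝ)) * (∑ j, h j z' t) - H z')| := by ring_nf
        _ ≤ |H z - (1/(n:ℝ)) * (∑ j, h j z t)|
            + |(1/(n:ℝ)) * (∑ j, h j z t) - (1/(n:ℝ)) * (∑ j, h j z' t)|
            + |(1/(n:ℝ)) * (∑ j, h j z' t) - H z'| := abs_add_three _ _ _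
        _ ≤ θ * η t + lam * |z - z'| + θ * η t :=
            add_le_add (add_le_add (by rw [abs_sub_comm]; exact a1) a3) a2
        _ = lam * |z - z'| + 2*θ*η t := by ring
    have hlim : Tendsto (fun t => lam * |z - z'| + 2*θ*η t) atTop
        (nhds (lam * |z - z'|)) := by
      have := (hη0.const_mul (2*θ)).const_add (lam * |z - z'|)
      simpa using this
    exact ge_of_tendsto' hlim key
  have hHcont : Continuous H := by
    have : LipschitzWith (Real.toNNReal lam) H := by
      apply LipschitzWith.of_dist_le_mul
      intro z z'
      rw [Real.dist_eq, Real.dist_eq]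
      calc |H z - H z'| ≤ lam * |z - z'| := hHLip z z'
        _ = Real.toNNReal lam * |z - z'| := by
            rw [Real.coe_toNNReal _ hlam.le]
    exact this.continuous
  -- H zstar = 0
  have hHzstar : H zstar = 0 := by
    by_contra hne
    rcases lt_or_gt_of_ne hne with hlt | hgt
    · have hopen : IsOpen {z : ℝ | H z < 0} := isOpen_lt hHcont continuous_const
      obtain ⟨ε, hε, hball⟩ := Metric.isOpen_iff.1 hopen zstar hlt
      have hz : H (zstar + ε/2) < 0 := by
        apply hball
        rw [Metric.mem_ball, Real.dist_eq, show zstar + ε/2 - zstar = ε/2 by ring,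
          abs_of_pos (by linarith : (0:ℝ) < ε/2)]
        linarith
      have := hsign (zstar + ε/2)
      nlinarith
    · have hopen : IsOpen {z : ℝ | 0 < H z} := isOpen_lt continuous_const hHcont
      obtain ⟨ε, hε, hball⟩ := Metric.isOpen_iff.1 hopen zstar hgt
      have hz : 0 < H (zstar - ε/2) := by
        apply hball
        rw [Metric.mem_ball, Real.dist_eq, show zstar - ε/2 - zstar = -(ε/2) by ring,
          abs_neg, abs_of_pos (by linarith : (0:ℝ) < ε/2)]
        linarith
      have := hsign (zstar - ε/2)
      nlinarith
  clear_value xb g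
  -- error sequence
  set e : ℕ → ℝ := fun t => xb t - zstar with hedef
  clear_value e
  have herec : ∀ t, e (t+1) = e t - η t * g t := by
    intro t; simp only [hedef]; rw [hxbrec t]; ring
  have hphi : ∀ t, 0 ≤ e t * H (xb t) := by
    intro t; rw [hedef]; exact hsign (xb t)
  have hstep : ∀ t, |e (t+1) - e t| ≤ M * η t := by
    intro t
    rw [herec t, show e t - η t * g t - e t = -(η t * g t) by ring, abs_neg, abs_mul,
      abs_of_nonneg (hη t)]
    calc η t * |g t| ≤ η t * M := mul_le_mul_of_nonneg_left (hgbd t) (hη t)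
      _ = M * η t := mul_comm _ _
  -- quadratic recursion
  have hrec2 : ∀ t, (e (t+1))^2 ≤ (e t)^2 - 2*(η t)*(e t * H (xb t))
      + (2*C*|e t| + M^2) * (η t)^2 := by
    intro t
    have h1 : |e t * (g t - H (xb t))| ≤ |e t| * (C * η t) := by
      rw [abs_mul]
      exact mul_le_mul_of_nonneg_left (hgH t) (abs_nonneg _)
    have h1' := (abs_le.1 h1).1
    have h2 : η t * (-(|e t| * (C * η t))) ≤ η t * (e t * (g t - H (xb t))) :=
      mul_le_mul_of_nonneg_left h1' (hη t)
    have hg2 : (g t)^2 ≤ M^2 := by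
      nlinarith [hgbd t, abs_nonneg (g t), le_abs_self (g t), neg_abs_le (g t)]
    have h3 : (η t)^2 * (g t)^2 ≤ (η t)^2 * M^2 :=
      mul_le_mul_of_nonneg_left hg2 (sq_nonneg _)
    rw [herec t]
    nlinarith [h2, h3]
  -- boundedness of e^2
  have hb' : Summable (fun t => C * (η t)^2) := hηsq.mul_left C
  have hc' : Summable (fun t => (C + M^2) * (η t)^2) := hηsq.mul_left _
  obtain ⟨A, hAdef⟩ : ∃ A : ℝ,
      A = ((e 0)^2 + ∑' s, (C + M^2) * (η s)^2) * Real.exp (∑' s, C * (η s)^2) :=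
    ⟨_, rfl⟩
  have hA : ∀ t, (e t)^2 ≤ A := by
    rw [hAdef]
    refine bounded_of_rec (fun t => (e t)^2) _ _ (sq_nonneg _)
      (fun t => by positivity) (fun t => by positivity) ?_ hb' hc'
    intro t
    show (e (t+1))^2 ≤ (e t)^2 * (1 + C * (η t)^2) + (C + M^2) * (η t)^2
    have h1 := hrec2 t
    have h2 : 0 ≤ 2 * η t * (e t * H (xb t)) :=
      mul_nonneg (mul_nonneg (by norm_num) (hη t)) (hphi t)
    have h3 : 2*C*|e t| ≤ C*(1 + (e t)^2) := by nlinarith [sq_nonneg (|e t| - 1), sq_abs (e t)]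
    nlinarith [sq_nonneg (η t), mul_le_mul_of_nonneg_right h3 (sq_nonneg (η t))]
  have hA0 : 0 ≤ A := le_trans (sq_nonneg (e 0)) (hA 0)
  obtain ⟨K, hKdef⟩ : ∃ K : ℝ, K = C * (1 + A) + M^2 := ⟨_, rfl⟩
  have hK0 : 0 < K := by
    rw [hKdef]
    nlinarith [mul_pos hC0 (show (0:ℝ) < 1 + A by linarith), sq_nonneg M]
  have hrec3 : ∀ t, (e (t+1))^2 ≤ (e t)^2 - 2*(η t)*(e t * H (xb t)) + K*(η t)^2 := by
    intro t
    have h1 := hrec2 t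
    have h3 : 2*C*|e t| + M^2 ≤ K := by
      rw [hKdef]
      nlinarith [sq_nonneg (|e t| - 1), sq_abs (e t), hA t]
    nlinarith [mul_le_mul_of_nonneg_right h3 (sq_nonneg (η t))]
  -- convergence of e^2
  set R : ℕ → ℝ := fun t => ∑ s ∈ Finset.range t, (η s)^2 with hRdef
  set S2 : ℝ := ∑' s, (η s)^2 with hS2def
  have hRle : ∀ t, R t ≤ S2 := fun t => Summable.sum_le_tsum _ (fun s _ => sq_nonneg _) hηsq
  have hRlim : Tendsto R atTop (nhds S2) := hηsq.hasSum.tendsto_sum_nat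
  set bb : ℕ → ℝ := fun t => (e t)^2 - K * R t with hbbdef
  have hbbanti : Antitone bb := by
    apply antitone_nat_of_succ_le
    intro t
    have h1 := hrec3 t
    have h2 : 0 ≤ 2 * η t * (e t * H (xb t)) :=
      mul_nonneg (mul_nonneg (by norm_num) (hη t)) (hphi t)
    have hR : R (t+1) = R t + (η t)^2 := Finset.sum_range_succ _ _
    simp only [hbbdef]
    rw [hR]
    nlinarith
  have hbbbdd : BddBelow (Set.range bb) := by
    refine ⟨-(K * S2), ?_⟩
    rintro y ⟨t, rfl⟩
    have := hRle t
    have := sq_nonneg (e t)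
    simp only [hbbdef]
    nlinarith
  have hbblim : Tendsto bb atTop (nhds (⨅ t, bb t)) :=
    tendsto_atTop_ciInf hbbanti hbbbdd
  set L : ℝ := (⨅ t, bb t) + K * S2 with hLdef
  have he2lim : Tendsto (fun t => (e t)^2) atTop (nhds L) := by
    have := hbblim.add (hRlim.const_mul K)
    refine this.congr fun t => ?_
    simp only [hbbdef]; ring
  have hL0 : 0 ≤ L := ge_of_tendsto' he2lim fun t => sq_nonneg _
  -- partial sums of η * φ are bounded
  have hsumbd : ∀ T, (e T)^2 + 2 * ∑ t ∈ Finset.range T, η t * (e t * H (xb t))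
      ≤ (e 0)^2 + K * R T := by
    intro T
    induction T with
    | zero => simp [hRdef]
    | succ T ih =>
      have h1 := hrec3 T
      have hR : R (T+1) = R T + (η T)^2 := Finset.sum_range_succ _ _
      rw [Finset.sum_range_succ, hR]
      nlinarith
  set B : ℝ := ((e 0)^2 + K * S2) / 2 with hBdef
  have hPbd : ∀ T, ∑ t ∈ Finset.range T, η t * (e t * H (xb t)) ≤ B := by
    intro T
    have h1 := hsumbd T
    have h2 := hRle T
    have h3 := sq_nonneg (e T)
    rw [hBdef]
    nlinarith [mul_le_mul_of_nonneg_left h2 hK0.le]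
  -- any limit of φ must be zero
  have hphilim0 : ∀ c : ℝ, Tendsto (fun t => e t * H (xb t)) atTop (nhds c) → c = 0 := by
    intro c hc
    have hc0 : 0 ≤ c := ge_of_tendsto' hc hphi
    rcases hc0.eq_or_lt with hceq | hcpos
    · exact hceq.symm
    exfalso
    have hev : ∀ᶠ t in atTop, c/2 < e t * H (xb t) :=
      hc.eventually (lt_mem_nhds (by linarith))
    obtain ⟨T1, hT1⟩ := eventually_atTop.1 hev
    set S : ℕ → ℝ := fun T => ∑ t ∈ Finset.range T, η t with hSdef
    have hbound : ∀ T, T1 ≤ T → S T ≤ S T1 + 2 * B / c := by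
      intro T hT
      have h1 : ∑ t ∈ Finset.Ico T1 T, η t * (e t * H (xb t))
          ≤ ∑ t ∈ Finset.range T, η t * (e t * H (xb t)) := by
        apply Finset.sum_le_sum_of_subset_of_nonneg
        · rw [Finset.range_eq_Ico]
          exact Finset.Ico_subset_Ico (Nat.zero_le _) le_rfl
        · intro t _ _
          exact mul_nonneg (hη t) (hphi t)
      have h2 : ∑ t ∈ Finset.Ico T1 T, (c/2) * η t
          ≤ ∑ t ∈ Finset.Ico T1 T, η t * (e t * H (xb t)) := by
        refine Finset.sum_le_sum fun t ht => ?_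
        have ht1 := (Finset.mem_Ico.1 ht).1
        calc (c/2) * η t ≤ (e t * H (xb t)) * η t :=
              mul_le_mul_of_nonneg_right (hT1 t ht1).le (hη t)
          _ = η t * (e t * H (xb t)) := mul_comm _ _
      have h3 : ∑ t ∈ Finset.Ico T1 T, (c/2) * η t = (c/2) * (S T - S T1) := by
        rw [← Finset.mul_sum, Finset.sum_Ico_eq_sub _ hT]
      have h4 := hPbd T
      have h5 : (c/2) * (S T - S T1) ≤ B := by
        rw [← h3]; linarith
      have h6 : S T - S T1 ≤ 2 * B / c := by
        rw [le_div_iff₀ (by linarith : (0:ℝ) < c)]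
        linarith
      linarith
    obtain ⟨T, hT1T, hTgt⟩ :
        ∃ T, T1 ≤ T ∧ S T1 + 2 * B / c < S T := by
      have := (eventually_ge_atTop T1).and
        (hηdiv.eventually_gt_atTop (S T1 + 2 * B / c))
      obtain ⟨T, h1, h2⟩ := this.exists
      exact ⟨T, h1, h2⟩
    exact absurd (hbound T hT1T) (by linarith)
  -- transfer convergence of xb to convergence of each x i
  have hfinal : ∀ z' : ℝ, Tendsto xb atTop (nhds z') →
      ∀ i : Fin n, Tendsto (fun t => x t i) atTop (nhds z') := by
    intro z' hz' i
    have hν0 : Tendsto (fun t => ν * η t) atTop (nhds 0) := by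
      simpa using hη0.const_mul ν
    have hdiff : Tendsto (fun t => x t i - xb t) atTop (nhds 0) := by
      apply squeeze_zero_norm ?_ hν0
      intro t
      simp only [hxbdef, Real.norm_eq_abs]
      exact hcons t i
    have := hdiff.add hz'
    simpa using this
  -- case split on L
  rcases hL0.eq_or_lt with hLzero | hLpos
  · -- L = 0 : xb → zstar
    refine ⟨zstar, hHzstar, ?_⟩
    apply hfinal
    have habs : Tendsto (fun t => |e t|) atTop (nhds 0) := by
      have h1 : Tendsto (fun t => Real.sqrt ((e t)^2)) atTop (nhds 0) := by
        have := (Real.continuous_sqrt.tendsto 0).comp (hLzero ▸ he2lim)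
        simpa [Function.comp_def] using this
      refine h1.congr fun t => Real.sqrt_sq_eq_abs _
    have helim : Tendsto e atTop (nhds 0) :=
      squeeze_zero_norm (fun t => le_of_eq (Real.norm_eq_abs _)) habs
    have := helim.add_const zstar
    simp only [hedef] at this
    simpa using this
  · -- L > 0
    set r : ℝ := Real.sqrt L with hrdef
    have hr : 0 < r := Real.sqrt_pos.2 hLpos
    have habs : Tendsto (fun t => |e t|) atTop (nhds r) := by
      have h1 : Tendsto (fun t => Real.sqrt ((e t)^2)) atTop (nhds r) := by
        exact (Real.continuous_sqrt.tendsto L).comp he2lim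
      refine h1.congr fun t => Real.sqrt_sq_eq_abs _
    have hev : ∀ᶠ t in atTop, r/2 < |e t| ∧ M * η t < r := by
      refine (habs.eventually (lt_mem_nhds (by linarith))).and ?_
      have : Tendsto (fun t => M * η t) atTop (nhds 0) := by
        simpa using hη0.const_mul M
      exact this.eventually (gt_mem_nhds hr)
    obtain ⟨T, hT⟩ := eventually_atTop.1 hev
    rcases lt_abs.1 (hT T le_rfl).1 with hpos | hneg
    · -- e stays positive ; xb → zstar + r
      have hsc : ∀ t, T ≤ t → r/2 < e t := by
        intro t ht
        induction t, ht using Nat.le_induction with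
        | base => exact hpos
        | succ t ht ih =>
          have h1 := (hT (t+1) (by omega)).1
          have h2 := (hT t ht).2
          have h3 := hstep t
          by_contra hle
          push_neg at hle
          have h4 : e (t+1) < -(r/2) := by
            rcases lt_abs.1 h1 with h | h
            · linarith
            · linarith
          have h5 : e t - e (t+1) ≤ |e (t+1) - e t| := by
            rw [abs_sub_comm]; exact le_abs_self _
          linarith
      have helim : Tendsto e atTop (nhds r) := by
        refine habs.congr' ?_
        filter_upwards [eventually_ge_atTop T] with t ht
        exact abs_of_pos (by linarith [hsc t ht])
      have hxblim : Tendsto xb atTop (nhds (zstar + r)) := by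
        have := helim.add_const zstar
        simp only [hedef] at this
        refine this.congr' ?_ |>.mono_right ?_
        · exact Eventually.of_forall fun t => by ring
        · rw [show zstar + r = r + zstar by ring]
      have hφlim : Tendsto (fun t => e t * H (xb t)) atTop (nhds (r * H (zstar + r))) :=
        helim.mul ((hHcont.tendsto _).comp hxblim)
      have hc := hphilim0 _ hφlim
      refine ⟨zstar + r, ?_, hfinal _ hxblim⟩
      have : r * H (zstar + r) = 0 := hc
      exact (mul_eq_zero.1 this).resolve_left (ne_of_gt hr)
    · -- e stays negative ; xb → zstar - r
      have hsc : ∀ t, T ≤ t → r/2 < -(e t) := by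
        intro t ht
        induction t, ht using Nat.le_induction with
        | base => exact hneg
        | succ t ht ih =>
          have h1 := (hT (t+1) (by omega)).1
          have h2 := (hT t ht).2
          have h3 := hstep t
          by_contra hle
          push_neg at hle
          have h4 : r/2 < e (t+1) := by
            rcases lt_abs.1 h1 with h | h
            · linarith
            · linarith
          have h5 : e (t+1) - e t ≤ |e (t+1) - e t| := le_abs_self _
          linarith
      have hnegelim : Tendsto (fun t => -(e t)) atTop (nhds r) := by
        refine habs.congr' ?_
        filter_upwards [eventually_ge_atTop T] with t ht
        have := hsc t ht
        rw [abs_of_neg (by linarith)]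
      have helim : Tendsto e atTop (nhds (-r)) := by
        have := hnegelim.neg
        simpa using this
      have hxblim : Tendsto xb atTop (nhds (zstar - r)) := by
        have := helim.add_const zstar
        simp only [hedef] at this
        refine this.congr' ?_ |>.mono_right ?_
        · exact Eventually.of_forall fun t => by ring
        · rw [show zstar - r = -r + zstar by ring]
      have hφlim : Tendsto (fun t => e t * H (xb t)) atTop
          (nhds ((-r) * H (zstar - r))) :=
        helim.mul ((hHcont.tendsto _).comp hxblim)
      have hc := hphilim0 _ hφlim
      refine ⟨zstar - r, ?_, hfinal _ hxblim⟩
      have : (-r) * H (zstar - r) = 0 := hc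
      exact (mul_eq_zero.1 this).resolve_left (by simpa using ne_of_gt hr)
end

section
/- Let H : ℝ → ℝ be bounded and continuous, and suppose there exists z⋆ ∈ ℝ with (z − z⋆)H(z) ≥ 0 for all z ∈ ℝ. Let η : ℕ → ℝ satisfy η(t) ≥ 0 for all t, ∑_{t=0}^∞ η(t) = ∞ and ∑_{t=0}^∞ η(t)² < ∞, and let r : ℕ → ℝ satisfy ∑_{t=0}^∞ |r(t)| < ∞. If u : ℕ → ℝ satisfies u(t+1) = u(t) − η(t)H(u(t)) + r(t) for all t, then there exists z' ∈ ℝ with H(z') = 0 such that lim_{t→∞} u(t) = z'. -/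
open Filter Finset

set_option maxHeartbeats 1000000

/-- Scalar perturbed root-finding convergence: if `H` is bounded, continuous and
satisfies `(z - z⋆) H(z) ≥ 0` for some `z⋆`, the step sizes are nonnegative,
non-summable but square-summable, and the perturbations are absolutely summable,
then the iterates `u(t+1) = u(t) - η(t) H(u(t)) + r(t)` converge to a root of `H`. -/
theorem scalar_perturbed_root_finding
    (H : ℝ → ℝ) (M : ℝ) (hbd : ∀ z, |H z| ≤ M) (hcont : Continuous H)
    (zstar : ℝ) (hsign : ∀ z : ℝ, 0 ≤ (z - zstar) * H z)
    (η : ℕ → ℝ) (hη : ∀ t, 0 ≤ η t)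
    (hηdiv : Filter.Tendsto (fun T => ∑ t ∈ Finset.range T, η t) Filter.atTop Filter.atTop)
    (hηsq : Summable fun t => (η t) ^ 2)
    (r : ℕ → ℝ) (hr : Summable fun t => |r t|)
    (u : ℕ → ℝ) (hu : ∀ t, u (t + 1) = u t - η t * H (u t) + r t) :
    ∃ z' : ℝ, H z' = 0 ∧ Filter.Tendsto u Filter.atTop (nhds z') := by
  have hM : 0 ≤ M := le_trans (abs_nonneg _) (hbd 0)
  -- H zstar = 0
  have hH0 : H zstar = 0 := by
    have hpos : 0 ≤ H zstar := by
      have ht : Tendsto (fun n : ℕ => zstar + 1 / (n + 1)) atTop (nhds zstar) := by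
        simpa using (tendsto_const_nhds (x := zstar)).add tendsto_one_div_add_atTop_nhds_zero_nat
      have hc : Tendsto (fun n : ℕ => H (zstar + 1 / (n + 1))) atTop (nhds (H zstar)) :=
        (hcont.tendsto zstar).comp ht
      refine ge_of_tendsto' hc fun n => ?_
      have h1 : (0 : ℝ) < 1 / (n + 1) := by positivity
      nlinarith [hsign (zstar + 1 / (n + 1))]
    have hneg : H zstar ≤ 0 := by
      have ht : Tendsto (fun n : ℕ => zstar - 1 / (n + 1)) atTop (nhds zstar) := by
        simpa using (tendsto_const_nhds (x := zstar)).sub tendsto_one_div_add_atTop_nhds_zero_nat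
      have hc : Tendsto (fun n : ℕ => H (zstar - 1 / (n + 1))) atTop (nhds (H zstar)) :=
        (hcont.tendsto zstar).comp ht
      refine le_of_tendsto' hc fun n => ?_
      have h1 : (0 : ℝ) < 1 / (n + 1) := by positivity
      nlinarith [hsign (zstar - 1 / (n + 1))]
    linarith
  -- notation
  set v : ℕ → ℝ := fun t => u t - zstar with hv
  set V : ℕ → ℝ := fun t => (v t) ^ 2 with hV
  have hVnn : ∀ t, 0 ≤ V t := fun t => sq_nonneg _
  have hg : ∀ t, 0 ≤ v t * H (u t) := by
    intro t; simpa [hv] using hsign (u t)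
  have hvrec : ∀ t, v (t + 1) = v t - η t * H (u t) + r t := by
    intro t; simp only [hv]; rw [hu t]; ring
  have hH2 : ∀ t, (H (u t)) ^ 2 ≤ M ^ 2 := fun t => by
    rcases abs_le.1 (hbd (u t)) with ⟨h1, h2⟩
    exact sq_le_sq' h1 h2
  have hVrec : ∀ t, V (t + 1) =
      V t - 2 * (η t * (v t * H (u t)))
        + ((η t) ^ 2 * (H (u t)) ^ 2 + 2 * r t * (v t - η t * H (u t)) + (r t) ^ 2) := by
    intro t; simp only [hV]; rw [hvrec t]; ring
  clear_value v V
  -- constants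
  set S : ℝ := ∑' t, (η t) ^ 2 with hSdef
  set R : ℝ := ∑' t, |r t| with hRdef
  have hS : ∀ t, (η t) ^ 2 ≤ S := fun t => Summable.le_tsum hηsq t fun j _ => sq_nonneg _
  have hRb : ∀ t, |r t| ≤ R := fun t => Summable.le_tsum hr t fun j _ => abs_nonneg _
  have hSnn : 0 ≤ S := tsum_nonneg fun t => sq_nonneg _
  have hRnn : 0 ≤ R := tsum_nonneg fun t => abs_nonneg _
  clear_value S R
  have hr2 : Summable fun t => (r t) ^ 2 := by
    refine Summable.of_nonneg_of_le (fun t => sq_nonneg _) (fun t => ?_) (hr.mul_left R)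
    nlinarith [hRb t, abs_nonneg (r t), sq_abs (r t)]
  -- boundedness of V
  set b : ℕ → ℝ := fun t => M ^ 2 * (η t) ^ 2 + (1 + S * M ^ 2) * |r t| + (r t) ^ 2 with hbdef
  have hbnn : ∀ t, 0 ≤ b t := by
    intro t
    have h1 : 0 ≤ 1 + S * M ^ 2 := by positivity
    have := mul_nonneg h1 (abs_nonneg (r t))
    positivity
  have hbsum : Summable b := ((hηsq.mul_left (M ^ 2)).add (hr.mul_left (1 + S * M ^ 2))).add hr2
  clear_value b
  have hbd1 : ∀ t, V (t + 1) ≤ (1 + |r t|) * V t + b t := by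
    intro t
    have key := hVrec t
    have h1 : (η t) ^ 2 * (H (u t)) ^ 2 ≤ (η t) ^ 2 * M ^ 2 :=
      mul_le_mul_of_nonneg_left (hH2 t) (sq_nonneg _)
    have h2 : (η t) ^ 2 * M ^ 2 ≤ S * M ^ 2 :=
      mul_le_mul_of_nonneg_right (hS t) (sq_nonneg M)
    have h3 : 0 ≤ η t * (v t * H (u t)) := mul_nonneg (hη t) (hg t)
    set x : ℝ := v t - η t * H (u t) with hx
    have hx2 : x ^ 2 ≤ V t + S * M ^ 2 := by
      have hxe : x ^ 2 = V t - 2 * (η t * (v t * H (u t))) + (η t) ^ 2 * (H (u t)) ^ 2 := by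
        simp only [hx, hV]; ring
      nlinarith
    have h4 : 2 * r t * x ≤ 2 * |r t| * |x| := by
      calc 2 * r t * x ≤ |2 * r t * x| := le_abs_self _
        _ = 2 * |r t| * |x| := by rw [abs_mul, abs_mul, abs_two]
    have h5 : 2 * |x| ≤ 1 + x ^ 2 := by nlinarith [sq_abs x, sq_nonneg (|x| - 1)]
    have h6 : 2 * |r t| * |x| ≤ |r t| * (1 + V t + S * M ^ 2) := by
      nlinarith [abs_nonneg (r t), abs_nonneg x]
    simp only [hbdef]
    nlinarith [abs_nonneg (r t)]
  set B : ℝ := ∑' t, b t with hBdef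
  have hBnn : 0 ≤ B := tsum_nonneg hbnn
  have hBb : ∀ T, ∑ t ∈ range T, b t ≤ B := fun T => Summable.sum_le_tsum _ (fun i _ => hbnn i) hbsum
  clear_value B
  have hprod : ∀ T, (1 : ℝ) ≤ ∏ t ∈ range T, (1 + |r t|) := by
    intro T
    induction T with
    | zero => simp
    | succ T ih =>
      rw [Finset.prod_range_succ]
      nlinarith [abs_nonneg (r T)]
  have hprodexp : ∀ T, ∏ t ∈ range T, (1 + |r t|) ≤ Real.exp R := by
    intro T
    calc ∏ t ∈ range T, (1 + |r t|) ≤ ∏ t ∈ range T, Real.exp |r t| := by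
          refine Finset.prod_le_prod (fun i _ => by positivity) fun i _ => ?_
          linarith [Real.add_one_le_exp |r i|]
      _ = Real.exp (∑ t ∈ range T, |r t|) := (Real.exp_sum _ _).symm
      _ ≤ Real.exp R := by
          rw [hRdef]
          exact Real.exp_le_exp.2 (Summable.sum_le_tsum _ (fun i _ => abs_nonneg _) hr)
  have hVgron : ∀ T, V T ≤ (V 0 + ∑ t ∈ range T, b t) * ∏ t ∈ range T, (1 + |r t|) := by
    intro T
    induction T with
    | zero => simp
    | succ T ih =>
      have hE1 : (1 : ℝ) ≤ ∏ t ∈ range T, (1 + |r t|) := hprod T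
      have hrnn : 0 ≤ |r T| := abs_nonneg _
      rw [Finset.prod_range_succ, Finset.sum_range_succ]
      have step := hbd1 T
      have h7 : (1 : ℝ) ≤ (∏ x ∈ range T, (1 + |r x|)) * (1 + |r T|) := by nlinarith
      have h8 : b T ≤ b T * ((∏ x ∈ range T, (1 + |r x|)) * (1 + |r T|)) :=
        le_mul_of_one_le_right (hbnn T) h7
      have h9 : (1 + |r T|) * V T ≤
          (1 + |r T|) * ((V 0 + ∑ t ∈ range T, b t) * ∏ t ∈ range T, (1 + |r t|)) :=
        mul_le_mul_of_nonneg_left ih (by linarith)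
      nlinarith [h8, h9, step]
  set C : ℝ := (V 0 + B) * Real.exp R with hCdef
  have hVC : ∀ t, V t ≤ C := by
    intro T
    have h0 : 0 ≤ V 0 + ∑ t ∈ range T, b t := by
      nlinarith [hVnn T, hVgron T, hprod T]
    calc V T ≤ (V 0 + ∑ t ∈ range T, b t) * ∏ t ∈ range T, (1 + |r t|) := hVgron T
      _ ≤ (V 0 + B) * Real.exp R := by
          have h1 := hBb T
          have h2 := hprodexp T
          have h3 := hprod T
          nlinarith [Real.exp_pos R]
  have hCnn : 0 ≤ C := le_trans (hVnn 0) (hVC 0)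
  clear_value C
  set D : ℝ := Real.sqrt C with hDdef
  have hDnn : 0 ≤ D := Real.sqrt_nonneg _
  have hvD : ∀ t, |v t| ≤ D := by
    intro t
    have : Real.sqrt (V t) ≤ Real.sqrt C := Real.sqrt_le_sqrt (hVC t)
    rwa [hV, Real.sqrt_sq_eq_abs] at this
  clear_value D
  -- key descent inequality
  set c : ℕ → ℝ := fun t =>
    M ^ 2 * (η t) ^ 2 + 2 * D * |r t| + M * (η t) ^ 2 + M * (r t) ^ 2 + (r t) ^ 2 with hcdef
  have hcnn : ∀ t, 0 ≤ c t := by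
    intro t
    have h1 : 0 ≤ 2 * D * |r t| := mul_nonneg (by linarith) (abs_nonneg _)
    have h2 : 0 ≤ M * (η t) ^ 2 := mul_nonneg hM (sq_nonneg _)
    have h3 : 0 ≤ M * (r t) ^ 2 := mul_nonneg hM (sq_nonneg _)
    have h4 : 0 ≤ M ^ 2 * (η t) ^ 2 := mul_nonneg (sq_nonneg _) (sq_nonneg _)
    simp only [hcdef]
    linarith [sq_nonneg (r t)]
  have hcsum : Summable c :=
    ((((hηsq.mul_left (M ^ 2)).add (hr.mul_left (2 * D))).add (hηsq.mul_left M)).add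
      (hr2.mul_left M)).add hr2
  clear_value c
  have hkey : ∀ t, V (t + 1) ≤ V t - 2 * (η t * (v t * H (u t))) + c t := by
    intro t
    have key := hVrec t
    have h1 : (η t) ^ 2 * (H (u t)) ^ 2 ≤ (η t) ^ 2 * M ^ 2 :=
      mul_le_mul_of_nonneg_left (hH2 t) (sq_nonneg _)
    set x : ℝ := v t - η t * H (u t) with hx
    have hxb : |x| ≤ D + η t * M := by
      calc |x| ≤ |v t| + |η t * H (u t)| := abs_sub _ _
        _ = |v t| + η t * |H (u t)| := by rw [abs_mul, abs_of_nonneg (hη t)]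
        _ ≤ D + η t * M := by
            have := mul_le_mul_of_nonneg_left (hbd (u t)) (hη t)
            linarith [hvD t]
    have h4 : 2 * r t * x ≤ 2 * |r t| * |x| := by
      calc 2 * r t * x ≤ |2 * r t * x| := le_abs_self _
        _ = 2 * |r t| * |x| := by rw [abs_mul, abs_mul, abs_two]
    have h5 : 2 * |r t| * |x| ≤ 2 * D * |r t| + M * (η t) ^ 2 + M * (r t) ^ 2 := by
      have h6 : 2 * |r t| * |x| ≤ 2 * |r t| * (D + η t * M) :=
        mul_le_mul_of_nonneg_left hxb (by positivity)
      have h7 : 2 * (η t) * |r t| ≤ (η t) ^ 2 + |r t| ^ 2 := two_mul_le_add_sq _ _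
      have h8 : M * (2 * (η t) * |r t|) ≤ M * ((η t) ^ 2 + |r t| ^ 2) :=
        mul_le_mul_of_nonneg_left h7 hM
      have h9 : 2 * |r t| * (D + η t * M) = 2 * D * |r t| + M * (2 * (η t) * |r t|) := by ring
      have h10 : M * |r t| ^ 2 = M * r t ^ 2 := by rw [sq_abs]
      linarith [h6]
    have heq : (η t) ^ 2 * M ^ 2 = M ^ 2 * (η t) ^ 2 := mul_comm _ _
    simp only [hcdef]
    linarith [key, h1, h4, h5, heq]
  set g : ℕ → ℝ := fun t => η t * (v t * H (u t)) with hgdef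
  have hgnn : ∀ t, 0 ≤ g t := fun t => mul_nonneg (hη t) (hg t)
  clear_value g
  -- telescoping
  have htel : ∀ T, V T + ∑ t ∈ range T, 2 * g t ≤ V 0 + ∑ t ∈ range T, c t := by
    intro T
    induction T with
    | zero => simp
    | succ T ih =>
      rw [Finset.sum_range_succ, Finset.sum_range_succ]
      have := hkey T
      simp only [hgdef] at *
      linarith
  have hgsum : Summable g := by
    have h2 : Summable fun t => 2 * g t := by
      refine summable_of_sum_range_le (fun t => by linarith [hgnn t]) (c := V 0 + ∑' t, c t)
        fun T => ?_
      have h3 := htel T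
      have h4 := Summable.sum_le_tsum (range T) (fun i _ => hcnn i) hcsum
      linarith [hVnn T]
    simpa using h2.div_const 2
  -- convergence of V
  set W : ℕ → ℝ := fun t => V t - ∑ s ∈ range t, c s with hWdef
  have hWanti : Antitone W := by
    refine antitone_nat_of_succ_le fun n => ?_
    simp only [hWdef, Finset.sum_range_succ]
    have := hkey n
    have := hgnn n
    simp only [hgdef] at *
    linarith
  have hWbdd : BddBelow (Set.range W) := by
    refine ⟨-(∑' t, c t), ?_⟩
    rintro x ⟨t, rfl⟩
    have h4 := Summable.sum_le_tsum (range t) (fun i _ => hcnn i) hcsum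
    have := hVnn t
    simp only [hWdef]
    linarith
  have hWlim : Tendsto W atTop (nhds (⨅ i, W i)) := tendsto_atTop_ciInf hWanti hWbdd
  clear_value W
  have hcsum_t : Tendsto (fun T => ∑ t ∈ range T, c t) atTop (nhds (∑' t, c t)) :=
    hcsum.hasSum.tendsto_sum_nat
  set L : ℝ := (⨅ i, W i) + ∑' t, c t with hLdef
  have hVlim : Tendsto V atTop (nhds L) := by
    have h := hWlim.add hcsum_t
    refine h.congr fun t => ?_
    simp only [hWdef]; ring
  have hLnn : 0 ≤ L := ge_of_tendsto' hVlim hVnn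
  clear_value L
  -- |v| → sqrt L
  have habslim : Tendsto (fun t => |v t|) atTop (nhds (Real.sqrt L)) := by
    have h := (Real.continuous_sqrt.tendsto L).comp hVlim
    refine h.congr fun t => ?_
    simp only [Function.comp, hV, Real.sqrt_sq_eq_abs]
  -- increments → 0
  have hη0 : Tendsto η atTop (nhds 0) := by
    have h := (Real.continuous_sqrt.tendsto 0).comp hηsq.tendsto_atTop_zero
    simp only [Function.comp, Real.sqrt_zero] at h
    refine h.congr fun t => Real.sqrt_sq (hη t)
  have hr0 : Tendsto r atTop (nhds 0) := (summable_abs_iff.mp hr).tendsto_atTop_zero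
  have hηH : Tendsto (fun t => η t * H (u t)) atTop (nhds 0) := by
    refine squeeze_zero_norm (a := fun t => M * η t) (fun t => ?_) ?_
    · rw [Real.norm_eq_abs, abs_mul, abs_of_nonneg (hη t), mul_comm]
      exact mul_le_mul_of_nonneg_right (hbd (u t)) (hη t)
    · simpa using hη0.const_mul M
  have hΔ : Tendsto (fun t => v (t + 1) - v t) atTop (nhds 0) := by
    have h := hηH.neg.add hr0
    rw [neg_zero, zero_add] at h
    refine h.congr fun t => ?_
    rw [hvrec t]; ring
  -- v converges
  have hexists : ∃ w : ℝ, Tendsto v atTop (nhds w) := by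
    rcases eq_or_lt_of_le hLnn with hL0 | hLpos
    · refine ⟨0, squeeze_zero_norm (a := fun t => |v t|)
        (fun t => le_of_eq (Real.norm_eq_abs _)) ?_⟩
      rw [← hL0, Real.sqrt_zero] at habslim
      exact habslim
    · set δ : ℝ := Real.sqrt L with hδdef
      have hδpos : 0 < δ := Real.sqrt_pos.2 hLpos
      clear_value δ
      have h1 : ∀ᶠ t in atTop, δ / 2 < |v t| :=
        habslim.eventually (eventually_gt_nhds (by linarith))
      have h2 : ∀ᶠ t in atTop, |v (t + 1) - v t| < δ := by
        have := hΔ.abs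
        rw [abs_zero] at this
        exact this.eventually (eventually_lt_nhds hδpos)
      obtain ⟨N, hN⟩ := eventually_atTop.mp (h1.and h2)
      have hNabs : δ / 2 < |v N| := (hN N le_rfl).1
      rcases lt_abs.mp hNabs with hpos | hneg
      · -- v N > δ/2 : stays positive
        have hstay : ∀ k, δ / 2 < v (N + k) := by
          intro k
          induction k with
          | zero => exact hpos
          | succ k ih =>
            have hk := hN (N + k) (Nat.le_add_right _ _)
            have habs : δ / 2 < |v (N + k + 1)| := (hN (N + k + 1) (by omega)).1
            have hd : |v (N + k + 1) - v (N + k)| < δ := hk.2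
            have hlow : -(δ / 2) < v (N + k + 1) := by
              have hl := (abs_lt.mp hd).1
              linarith only [ih, hl]
            rcases lt_abs.mp habs with h | h
            · exact h
            · exact absurd hlow (by linarith only [h])
        refine ⟨δ, habslim.congr' ?_⟩
        refine eventually_atTop.mpr ⟨N, fun t ht => ?_⟩
        obtain ⟨k, rfl⟩ := Nat.exists_eq_add_of_le ht
        show |v (N + k)| = v (N + k)
        exact abs_of_pos (lt_trans (by linarith) (hstay k))
      · -- v N < -δ/2 : stays negative
        have hstay : ∀ k, v (N + k) < -(δ / 2) := by
          intro k
          induction k with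
          | zero => show v N < -(δ / 2); linarith only [hneg]
          | succ k ih =>
            have hk := hN (N + k) (Nat.le_add_right _ _)
            have habs : δ / 2 < |v (N + k + 1)| := (hN (N + k + 1) (by omega)).1
            have hd : |v (N + k + 1) - v (N + k)| < δ := hk.2
            have hhigh : v (N + k + 1) < δ / 2 := by
              have hl := (abs_lt.mp hd).2
              linarith only [ih, hl]
            rcases lt_abs.mp habs with h | h
            · exact absurd hhigh (by linarith only [h])
            · show v (N + k + 1) < -(δ / 2); linarith only [h]
        refine ⟨-δ, ?_⟩
        have hneglim : Tendsto (fun t => -|v t|) atTop (nhds (-δ)) := habslim.neg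
        refine hneglim.congr' ?_
        refine eventually_atTop.mpr ⟨N, fun t ht => ?_⟩
        obtain ⟨k, rfl⟩ := Nat.exists_eq_add_of_le ht
        show -|v (N + k)| = v (N + k)
        rw [abs_of_neg (lt_trans (hstay k) (by linarith))]
        ring
  obtain ⟨w, hw⟩ := hexists
  have huw : Tendsto u atTop (nhds (w + zstar)) := by
    have h := hw.add (tendsto_const_nhds (x := zstar))
    refine h.congr fun t => ?_
    simp [hv]
  set z' : ℝ := w + zstar with hz'def
  clear_value z'
  -- the limit is a root
  have hgZ : Tendsto (fun t => v t * H (u t)) atTop (nhds (w * H z')) :=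
    hw.mul ((hcont.tendsto z').comp huw)
  have hwz : w * H z' = 0 := by
    by_contra hne
    have hpos : 0 < w * H z' := lt_of_le_of_ne (ge_of_tendsto' hgZ hg) (Ne.symm hne)
    set ε : ℝ := w * H z' with hεdef
    clear_value ε
    have hev : ∀ᶠ t in atTop, ε / 2 < v t * H (u t) :=
      hgZ.eventually (eventually_gt_nhds (by linarith))
    have hbound : ∀ᶠ t in atTop, ‖η t‖ ≤ (2 / ε) * g t := by
      filter_upwards [hev] with t ht
      rw [Real.norm_eq_abs, abs_of_nonneg (hη t)]
      have h1 : η t * (ε / 2) ≤ η t * (v t * H (u t)) :=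
        mul_le_mul_of_nonneg_left (le_of_lt ht) (hη t)
      have h2 : (0 : ℝ) ≤ 2 / ε := by positivity
      simp only [hgdef]
      calc η t = (2 / ε) * (η t * (ε / 2)) := by
            field_simp
        _ ≤ (2 / ε) * (η t * (v t * H (u t))) := mul_le_mul_of_nonneg_left h1 h2
    have hηsum : Summable η :=
      Summable.of_norm_bounded_eventually_nat (hgsum.mul_left (2 / ε)) hbound
    exact absurd hηsum ((not_summable_iff_tendsto_nat_atTop_of_nonneg hη).mpr hηdiv)
  have hroot : H z' = 0 := by
    rcases mul_eq_zero.mp hwz with hw0 | hH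
    · rw [hz'def, hw0, zero_add]; exact hH0
    · exact hH
  exact ⟨z', hroot, huw⟩
end

section
/- Let V, a, b, c : ℕ → ℝ be sequences with V(t) ≥ 0, a(t) ≥ 0, b(t) ≥ 0 and c(t) ≥ 0 for all t, satisfying V(t+1) ≤ (1 + a(t))V(t) − b(t) + c(t) for all t. If ∑_{t=0}^∞ a(t) < ∞ and ∑_{t=0}^∞ c(t) < ∞, then lim_{t→∞} V(t) exists (is a finite real number) and ∑_{t=0}^∞ b(t) < ∞. -/
/-- Deterministic Robbins–Siegmund theorem (Proposition 2 of the paper):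
if `V(t+1) ≤ (1 + a(t)) V(t) - b(t) + c(t)` with nonnegative sequences, `∑ a < ∞`
and `∑ c < ∞`, then `V` converges to a (finite) limit and `∑ b < ∞`. -/
theorem deterministic_robbins_siegmund
    (V a b c : ℕ → ℝ)
    (hV : ∀ t, 0 ≤ V t) (ha : ∀ t, 0 ≤ a t) (hb : ∀ t, 0 ≤ b t) (hc : ∀ t, 0 ≤ c t)
    (hrec : ∀ t, V (t + 1) ≤ (1 + a t) * V t - b t + c t)
    (hsa : Summable a) (hsc : Summable c) :
    (∃ L : ℝ, Filter.Tendsto V Filter.atTop (nhds L)) ∧ Summable b := by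
  -- the product sequence
  set A : ℕ → ℝ := fun t => ∏ s ∈ Finset.range t, (1 + a s) with hA
  have hAsucc : ∀ t, A (t + 1) = A t * (1 + a t) := fun t => Finset.prod_range_succ _ _
  have hA1 : ∀ t, 1 ≤ A t := by
    intro t
    induction t with
    | zero => simp [hA]
    | succ n ih => rw [hAsucc]; nlinarith [ha n]
  have hApos : ∀ t, 0 < A t := fun t => lt_of_lt_of_le one_pos (hA1 t)
  have hAmono : Monotone A := by
    apply monotone_nat_of_le_succ
    intro t
    rw [hAsucc t]
    nlinarith [hApos t, ha t]
  have hAbd : ∀ t, A t ≤ Real.exp (∑' s, a s) := by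
    intro t
    calc A t ≤ ∏ s ∈ Finset.range t, Real.exp (a s) := by
          apply Finset.prod_le_prod
          · intro i _; linarith [ha i]
          · intro i _; linarith [Real.add_one_le_exp (a i)]
      _ = Real.exp (∑ s ∈ Finset.range t, a s) := by rw [Real.exp_sum]
      _ ≤ Real.exp (∑' s, a s) := by
          apply Real.exp_le_exp.2
          exact Summable.sum_le_tsum _ (fun i _ => ha i) hsa
  set W : ℕ → ℝ := fun t => V t / A t with hW
  have hWnonneg : ∀ t, 0 ≤ W t := fun t => div_nonneg (hV t) (hApos t).le
  have hWstep : ∀ t, W (t + 1) ≤ W t + c t := by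
    intro t
    have h1 : V (t + 1) ≤ (1 + a t) * V t + c t := by nlinarith [hrec t, hb t]
    have hA1' := hA1 (t + 1)
    have e : V t / A t * A t = V t := div_mul_cancel₀ _ (hApos t).ne'
    rw [hW]
    simp only
    rw [div_le_iff₀ (hApos (t + 1)), hAsucc t, add_mul, ← mul_assoc, e]
    rw [hAsucc] at hA1'
    have hc' : c t ≤ c t * (A t * (1 + a t)) := le_mul_of_one_le_right (hc t) hA1'
    linarith
  set S : ℕ → ℝ := fun t => ∑ s ∈ Finset.range t, c s with hS
  set X : ℕ → ℝ := fun t => W t - S t with hX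
  have hXanti : Antitone X := by
    apply antitone_nat_of_succ_le
    intro t
    have : S (t + 1) = S t + c t := Finset.sum_range_succ _ _
    simp only [hX, this]
    linarith [hWstep t]
  have hSbd : ∀ t, S t ≤ ∑' s, c s := fun t => Summable.sum_le_tsum _ (fun i _ => hc i) hsc
  have hXbdd : BddBelow (Set.range X) := by
    refine ⟨-(∑' s, c s), ?_⟩
    rintro x ⟨t, rfl⟩
    simp only [hX]
    linarith [hWnonneg t, hSbd t]
  have hXconv : Filter.Tendsto X Filter.atTop (nhds (⨅ t, X t)) :=
    tendsto_atTop_ciInf hXanti hXbdd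
  have hSconv : Filter.Tendsto S Filter.atTop (nhds (∑' s, c s)) :=
    hsc.hasSum.tendsto_sum_nat
  have hWconv : Filter.Tendsto W Filter.atTop (nhds ((⨅ t, X t) + ∑' s, c s)) := by
    have : W = fun t => X t + S t := by funext t; simp [hX]
    rw [this]
    exact hXconv.add hSconv
  have hAconv : Filter.Tendsto A Filter.atTop (nhds (⨆ t, A t)) :=
    tendsto_atTop_ciSup hAmono ⟨Real.exp (∑' s, a s), by rintro x ⟨t, rfl⟩; exact hAbd t⟩
  have hVW : V = fun t => W t * A t := by
    funext t
    simp [hW, div_mul_cancel₀ _ (hApos t).ne']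
  have hVconv : Filter.Tendsto V Filter.atTop
      (nhds (((⨅ t, X t) + ∑' s, c s) * (⨆ t, A t))) := by
    rw [hVW]; exact hWconv.mul hAconv
  refine ⟨⟨_, hVconv⟩, ?_⟩
  -- boundedness of V
  obtain ⟨M, hM⟩ := hVconv.bddAbove_range
  have hM' : ∀ t, V t ≤ M := fun t => hM ⟨t, rfl⟩
  have hM0 : 0 ≤ M := le_trans (hV 0) (hM' 0)
  apply summable_of_sum_range_le hb (c := V 0 + M * (∑' s, a s) + ∑' s, c s)
  intro n
  have key : ∀ t, b t ≤ (V t - V (t + 1)) + (M * a t + c t) := by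
    intro t
    have h2 : a t * V t ≤ a t * M := mul_le_mul_of_nonneg_left (hM' t) (ha t)
    nlinarith [hrec t]
  calc ∑ t ∈ Finset.range n, b t
      ≤ ∑ t ∈ Finset.range n, ((V t - V (t + 1)) + (M * a t + c t)) :=
        Finset.sum_le_sum fun t _ => key t
    _ = (V 0 - V n) + (M * ∑ t ∈ Finset.range n, a t + ∑ t ∈ Finset.range n, c t) := by
        rw [Finset.sum_add_distrib, Finset.sum_range_sub' V, Finset.sum_add_distrib,
          ← Finset.mul_sum]
    _ ≤ V 0 + (M * (∑' s, a s) + ∑' s, c s) := by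
        have h3 : ∑ t ∈ Finset.range n, a t ≤ ∑' s, a s :=
          Summable.sum_le_tsum _ (fun i _ => ha i) hsa
        have h4 : ∑ t ∈ Finset.range n, c t ≤ ∑' s, c s :=
          Summable.sum_le_tsum _ (fun i _ => hc i) hsc
        have h5 : M * ∑ t ∈ Finset.range n, a t ≤ M * ∑' s, a s :=
          mul_le_mul_of_nonneg_left h3 hM0
        linarith [hV n]
    _ = V 0 + M * (∑' s, a s) + ∑' s, c s := by ring
end

section
/- Let η : ℕ → ℝ satisfy 0 ≤ η(t) ≤ η̄ for all t and some η̄ > 0, let H : ℝ → ℝ satisfy |H(z)| ≤ M for all z and some M > 0, and suppose there exists z⋆ ∈ ℝ with (z − z⋆)H(z) ≥ 0 for all z ∈ ℝ. Let w : ℕ → ℝ satisfy ∑_{t=0}^∞ |w(t)| ≤ Ω for some Ω > 0. If u : ℕ → ℝ satisfies u(t+1) = u(t) − η(t)H(u(t)) + w(t) for all t, then the sequence u is bounded: there exists K > 0 with |u(t)| ≤ K for all t. -/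
/-- Lemma 5 of the paper: boundedness of the perturbed scalar iterates
`u(t+1) = u(t) - η(t) H(u(t)) + w(t)` when `0 ≤ η(t) ≤ η̄`, `|H| ≤ M`,
`(z - z⋆) H(z) ≥ 0` for some `z⋆`, and `∑ |w(t)| ≤ Ω`. -/
theorem bounded_perturbed_iterates
    (η : ℕ → ℝ) (ηbar : ℝ) (hηbar : 0 < ηbar) (hη : ∀ t, 0 ≤ η t ∧ η t ≤ ηbar)
    (H : ℝ → ℝ) (M : ℝ) (hM : 0 < M) (hbd : ∀ z, |H z| ≤ M)
    (zstar : ℝ) (hsign : ∀ z : ℝ, 0 ≤ (z - zstar) * H z)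
    (w : ℕ → ℝ) (Ω : ℝ) (hΩ : 0 < Ω)
    (hw : ∀ T : ℕ, ∑ t ∈ Finset.range T, |w t| ≤ Ω)
    (u : ℕ → ℝ) (hu : ∀ t, u (t + 1) = u t - η t * H (u t) + w t) :
    ∃ K : ℝ, 0 < K ∧ ∀ t, |u t| ≤ K := by
  set A : ℝ := max (|u 0 - zstar|) (ηbar * M) with hA
  have hAM : ηbar * M ≤ A := le_max_right _ _
  have step : ∀ t, |u t - zstar - η t * H (u t)| ≤ max (|u t - zstar|) (ηbar * M) := by
    intro t
    set v := u t - zstar with hv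
    set h := H (u t) with hh
    have hvh : 0 ≤ v * h := hsign (u t)
    have hhM' := abs_le.mp (hbd (u t))
    have hηt := hη t
    have hηM : η t * |h| ≤ ηbar * M :=
      mul_le_mul hηt.2 (hbd (u t)) (abs_nonneg _) (le_of_lt hηbar)
    rcases lt_trichotomy v 0 with hvs | hvs | hvs
    · have hhs : h ≤ 0 := by nlinarith
      have h1 : 0 ≤ -(η t * h) := by nlinarith
      have h2 : -(η t * h) ≤ ηbar * M := by nlinarith [abs_of_nonpos hhs]
      rw [abs_le]
      constructor
      · have : -|v| ≤ v - η t * h := by nlinarith [abs_of_neg hvs]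
        exact le_trans (neg_le_neg (le_max_left _ _)) this
      · have : v - η t * h ≤ ηbar * M := by nlinarith
        exact le_trans this (le_max_right _ _)
    · rw [hvs]
      have : |0 - η t * h| = η t * |h| := by
        rw [zero_sub, abs_neg, abs_mul, abs_of_nonneg hηt.1]
      rw [this]
      exact le_trans hηM (le_max_right _ _)
    · have hhs : 0 ≤ h := by nlinarith
      have h1 : 0 ≤ η t * h := mul_nonneg hηt.1 hhs
      have h2 : η t * h ≤ ηbar * M := by nlinarith [abs_of_nonneg hhs]
      rw [abs_le]
      constructor
      · have : -(ηbar * M) ≤ v - η t * h := by nlinarith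
        exact le_trans (neg_le_neg (le_max_right _ _)) this
      · have : v - η t * h ≤ |v| := by nlinarith [abs_of_pos hvs]
        exact le_trans this (le_max_left _ _)
  have key : ∀ t, |u t - zstar| ≤ A + ∑ s ∈ Finset.range t, |w s| := by
    intro t
    induction t with
    | zero => simpa using le_trans (le_max_left (|u 0 - zstar|) (ηbar * M)) (le_of_eq hA.symm)
    | succ t ih =>
      have hsum : (0:ℝ) ≤ ∑ s ∈ Finset.range t, |w s| :=
        Finset.sum_nonneg fun _ _ => abs_nonneg _
      have h1 : |u (t+1) - zstar| ≤ |u t - zstar - η t * H (u t)| + |w t| := by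
        rw [hu t, show u t - η t * H (u t) + w t - zstar
            = (u t - zstar - η t * H (u t)) + w t by ring]
        exact abs_add_le _ _
      have h2 : max (|u t - zstar|) (ηbar * M) ≤ A + ∑ s ∈ Finset.range t, |w s| :=
        max_le ih (by linarith)
      rw [Finset.sum_range_succ]
      calc |u (t+1) - zstar| ≤ |u t - zstar - η t * H (u t)| + |w t| := h1
        _ ≤ (A + ∑ s ∈ Finset.range t, |w s|) + |w t| := by
            have := step t; linarith
        _ = A + (∑ s ∈ Finset.range t, |w s| + |w t|) := by ring
  refine ⟨A + Ω + |zstar|, ?_, ?_⟩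
  · have : 0 < ηbar * M := mul_pos hηbar hM
    have := abs_nonneg zstar
    linarith
  · intro t
    have h1 : |u t| ≤ |u t - zstar| + |zstar| := by
      calc |u t| = |(u t - zstar) + zstar| := by ring_nf
        _ ≤ |u t - zstar| + |zstar| := abs_add_le _ _
    have := key t
    have := hw t
    linarith
end

section
/- Let P ∈ ℝ and suppose z* ∈ ℝ is an optimal threshold, i.e., f(z*) ≥ P and f(z) < P for all z < z*. Then z* is the criticality value of some load: there exists i ∈ I with C_i = z*. -/
/-- Lemma 1 of the paper: an optimal threshold is the criticality value of some load. -/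
theorem opt_threshold_is_criticality_value
    {I : Type*} [Fintype I] [Nonempty I] (ℓ C : I → ℝ)
    (hℓ : ∀ i, 0 < ℓ i) (hC : ∀ i, C i ∈ Set.Icc (0 : ℝ) 1)
    (P zstar : ℝ) (hopt : OptThresh ℓ C P zstar) :
    ∃ i : I, C i = zstar := by
  by_contra h
  push_neg at h
  obtain ⟨hge, hlt⟩ := hopt
  set S := Finset.univ.filter (fun i => C i ≤ zstar) with hS
  by_cases hSe : S.Nonempty
  · obtain ⟨m, hmS, hmax⟩ := S.exists_max_image C hSe
    have hmlt : C m < zstar := lt_of_le_of_ne (Finset.mem_filter.mp hmS).2 (h m)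
    set z' := (C m + zstar) / 2 with hz'
    have h1 : C m < z' := by simp only [hz']; linarith
    have h2 : z' < zstar := by simp only [hz']; linarith
    have heq : Finset.univ.filter (fun i => C i ≤ z') = S := by
      ext i
      simp only [Finset.mem_filter, Finset.mem_univ, true_and, hS]
      constructor
      · intro hi; linarith
      · intro hi
        have : C i ≤ C m := hmax i (Finset.mem_filter.mpr ⟨Finset.mem_univ i, hi⟩)
        linarith
    have : ccf ℓ C z' = ccf ℓ C zstar := by
      unfold ccf; rw [heq]
    have := hlt z' h2
    linarith
  · have h0 : ccf ℓ C zstar = 0 := by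
      unfold ccf
      rw [show Finset.filter (fun i => C i ≤ zstar) Finset.univ = (∅ : Finset I) from Finset.not_nonempty_iff_eq_empty.mp hSe]
      simp
    have := hlt (zstar - 1) (by linarith)
    have hnn : 0 ≤ ccf ℓ C (zstar - 1) :=
      Finset.sum_nonneg fun i _ => (hℓ i).le
    linarith
end

section
/- Suppose c > 0 satisfies the gap condition, i.e., C_i − C_j ≥ c whenever i, j ∈ I satisfy C_i > C_j. Then the CCF and its surrogate agree at every criticality value: f(C_i) = f̂(C_i) for all i ∈ I. -/
/-- Lemma 2 of the paper: under the gap condition, the CCF and its surrogate agree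
at every criticality value. -/
theorem ccf_eq_sccf_at_criticality
    {I : Type*} [Fintype I] [Nonempty I] (ℓ C : I → ℝ)
    (hℓ : ∀ i, 0 < ℓ i) (hC : ∀ i, C i ∈ Set.Icc (0 : ℝ) 1)
    (c : ℝ) (hc : 0 < c) (hgap : GapCond C c) :
    ∀ i : I, ccf ℓ C (C i) = sccf ℓ C c (C i) := by
  intro i
  unfold ccf sccf
  rw [Finset.sum_filter]
  apply Finset.sum_congr rfl
  intro j _
  by_cases h : C j ≤ C i
  · rw [if_pos h]
    have : rampW c (C i - C j) = 1 := by
      unfold rampW; rw [if_pos (by linarith)]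
    rw [this, mul_one]
  · rw [if_neg h]
    push_neg at h
    have hg := hgap j i h
    have : rampW c (C i - C j) = 0 := by
      unfold rampW
      rw [if_neg (by linarith)]
      by_cases h2 : -c ≤ C i - C j
      · rw [if_pos h2]
        have : C i - C j = -c := le_antisymm (by linarith) h2
        rw [this]; field_simp; norm_num
      · rw [if_neg h2]
    rw [this, mul_zero]
end

section
/- Suppose c > 0 satisfies the gap condition, z* is an optimal threshold for P with f(z*) > P, and ẑ ∈ ℝ satisfies f̂(ẑ) = P. Then ẑ < z*, and ẑ is not a criticality value: C_i ≠ ẑ for every i ∈ I. -/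
/-- When `f(z*) > P`, the surrogate root `ẑ` lies strictly below `z*` and is
not a criticality value. -/
theorem zhat_lt_zstar_and_not_criticality
    {I : Type*} [Fintype I] [Nonempty I] (ℓ C : I → ℝ)
    (hℓ : ∀ i, 0 < ℓ i) (hC : ∀ i, C i ∈ Set.Icc (0 : ℝ) 1)
    (c : ℝ) (hc : 0 < c) (hgap : GapCond C c)
    (P zstar : ℝ) (hopt : OptThresh ℓ C P zstar)
    (hstrict : P < ccf ℓ C zstar)
    (zhat : ℝ) (hzhat : sccf ℓ C c zhat = P) :
    zhat < zstar ∧ ∀ i : I, C i ≠ zhat := by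
  have hramp_nonneg : ∀ z : ℝ, 0 ≤ rampW c z := by
    intro z
    unfold rampW
    split_ifs with h1 h2
    · norm_num
    · have : -1 ≤ z / c := by
        rw [le_div_iff₀ hc]; linarith
      linarith
    · exact le_refl 0
  have hramp_one : ∀ z : ℝ, 0 ≤ z → rampW c z = 1 := by
    intro z hz; unfold rampW; simp [hz]
  have hramp_zero : ∀ z : ℝ, z ≤ -c → rampW c z = 0 := by
    intro z hz
    unfold rampW
    split_ifs with h2 h3
    · linarith
    · have hzc : z = -c := le_antisymm hz h3
      rw [hzc]; field_simp; norm_num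
    · rfl
  have hramp_mono : ∀ z z' : ℝ, z ≤ z' → rampW c z ≤ rampW c z' := by
    intro z z' hzz
    have key1 : z / c ≤ z' / c := by gcongr
    unfold rampW
    split_ifs <;> try linarith
    · have : z / c ≤ 0 := div_nonpos_of_nonpos_of_nonneg (by linarith) hc.le
      linarith
    · have h' : -c / c ≤ z' / c := by gcongr <;> linarith
      have h'' : -c / c = -1 := by field_simp
      linarith
  have hccf_le : ∀ z : ℝ, ccf ℓ C z ≤ sccf ℓ C c z := by
    intro z
    unfold ccf sccf
    rw [Finset.sum_filter]
    apply Finset.sum_le_sum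
    intro i _
    by_cases h : C i ≤ z
    · simp [h, hramp_one (z - C i) (by linarith)]
    · simp [h]
      exact mul_nonneg (hℓ i).le (hramp_nonneg _)
  have hsccf_mono : ∀ z z' : ℝ, z ≤ z' → sccf ℓ C c z ≤ sccf ℓ C c z' := by
    intro z z' hzz
    unfold sccf
    apply Finset.sum_le_sum
    intro i _
    exact mul_le_mul_of_nonneg_left (hramp_mono _ _ (by linarith)) (hℓ i).le
  have h1 : zhat < zstar := by
    by_contra h
    push_neg at h
    have := hsccf_mono zstar zhat h
    have h2 := hccf_le zstar
    linarith [hzhat ▸ this]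
  refine ⟨h1, ?_⟩
  intro i hi
  have heq : sccf ℓ C c zhat = ccf ℓ C zhat := by
    unfold sccf ccf
    rw [Finset.sum_filter]
    apply Finset.sum_congr rfl
    intro j _
    by_cases h : C j ≤ zhat
    · simp [h, hramp_one (zhat - C j) (by linarith)]
    · push_neg at h
      have hlt : C i < C j := by rw [hi]; exact h
      have := hgap j i hlt
      have : zhat - C j ≤ -c := by rw [← hi]; linarith
      simp [not_le.mpr h, hramp_zero _ this]
  have hlt := hopt.2 zhat h1
  rw [heq] at hzhat
  linarith
end

section
/- Suppose c > 0 satisfies the gap condition, z* is an optimal threshold for P with f(z*) > P, and ẑ ∈ ℝ satisfies f̂(ẑ) = P. Then the set {i ∈ I : C_i ≥ ẑ} is nonempty and z* = min{C_i : i ∈ I, C_i ≥ ẑ}. -/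
/-- When `f(z*) > P`: `z* = min {C i : C i ≥ ẑ}`. -/
theorem opt_threshold_min_geq_zhat
    {I : Type*} [Fintype I] [Nonempty I] (ℓ C : I → ℝ)
    (hℓ : ∀ i, 0 < ℓ i) (hC : ∀ i, C i ∈ Set.Icc (0 : ℝ) 1)
    (c : ℝ) (hc : 0 < c) (hgap : GapCond C c)
    (P zstar : ℝ) (hopt : OptThresh ℓ C P zstar)
    (hstrict : P < ccf ℓ C zstar)
    (zhat : ℝ) (hzhat : sccf ℓ C c zhat = P) :
    ∃ hne : (Finset.univ.filter (fun i : I => zhat ≤ C i)).Nonempty,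
      zstar = (Finset.univ.filter (fun i : I => zhat ≤ C i)).inf' hne C := by
  -- basic ramp facts
  have hW0 : ∀ z : ℝ, 0 ≤ rampW c z := by
    intro z; unfold rampW
    split_ifs with h1 h2
    · norm_num
    · have : (-1 : ℝ) ≤ z / c := by
        rw [neg_le, ← neg_div]
        exact (div_le_one hc).mpr (by linarith)
      linarith
    · exact le_refl _
  have hW1 : ∀ z : ℝ, rampW c z ≤ 1 := by
    intro z; unfold rampW
    split_ifs with h1 h2
    · exact le_refl _
    · have : z / c ≤ 0 := div_nonpos_of_nonpos_of_nonneg (by linarith) hc.le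
      linarith
    · norm_num
  have hWone : ∀ z : ℝ, 0 ≤ z → rampW c z = 1 := by
    intro z hz; unfold rampW; rw [if_pos hz]
  have hWzero : ∀ z : ℝ, z ≤ -c → rampW c z = 0 := by
    intro z hz; unfold rampW
    rw [if_neg (by linarith)]
    split_ifs with h2
    · have : z = -c := le_antisymm hz h2
      field_simp [this]
      linarith
    · rfl
  -- Step 1: zstar is attained: ∃ k, C k = zstar
  obtain ⟨k, hk⟩ : ∃ k, C k = zstar := by
    by_contra h
    push_neg at h
    set s := Finset.univ.filter (fun i => C i < zstar) with hs
    rcases s.eq_empty_or_nonempty with he | hne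
    · have h1 : Finset.univ.filter (fun i => C i ≤ zstar) = (∅ : Finset I) := by
        rw [Finset.eq_empty_iff_forall_notMem]
        intro i hi
        rw [Finset.mem_filter] at hi
        have : C i < zstar := lt_of_le_of_ne hi.2 (h i)
        exact Finset.eq_empty_iff_forall_notMem.mp he i
          (Finset.mem_filter.mpr ⟨Finset.mem_univ i, this⟩)
      have h2 : ccf ℓ C zstar = 0 := by rw [ccf, h1]; simp
      have h3 : ccf ℓ C (zstar - 1) < P := hopt.2 _ (by linarith)
      have h4 : ccf ℓ C (zstar - 1) = 0 := by
        rw [ccf]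
        apply Finset.sum_eq_zero
        intro i hi
        rw [Finset.mem_filter] at hi
        exact absurd (Finset.eq_empty_iff_forall_notMem.mp h1 i
          (Finset.mem_filter.mpr ⟨Finset.mem_univ i, by linarith [hi.2]⟩)) (fun x => x)
      linarith
    · obtain ⟨m, hm, hmax⟩ := s.exists_max_image C hne
      have hmlt : C m < zstar := (Finset.mem_filter.mp hm).2
      have heqf : Finset.univ.filter (fun i => C i ≤ C m)
          = Finset.univ.filter (fun i => C i ≤ zstar) := by
        ext i
        simp only [Finset.mem_filter, Finset.mem_univ, true_and]
        constructor
        · intro hi; linarith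
        · intro hi
          have : C i < zstar := lt_of_le_of_ne hi (h i)
          exact hmax i (Finset.mem_filter.mpr ⟨Finset.mem_univ i, this⟩)
      have : ccf ℓ C (C m) = ccf ℓ C zstar := by rw [ccf, ccf, heqf]
      have := hopt.2 (C m) hmlt
      linarith
  -- Step 2: zhat ≤ zstar
  have hle : zhat ≤ zstar := by
    by_contra h
    push_neg at h
    have hge : ccf ℓ C zstar ≤ sccf ℓ C c zhat := by
      rw [ccf, sccf]
      have : ∀ i ∈ Finset.univ.filter (fun i => C i ≤ zstar),
          ℓ i = ℓ i * rampW c (zhat - C i) := by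
        intro i hi
        rw [Finset.mem_filter] at hi
        rw [hWone _ (by linarith [hi.2]), mul_one]
      rw [Finset.sum_congr rfl this]
      exact Finset.sum_le_sum_of_subset_of_nonneg (Finset.filter_subset _ _)
        (fun i _ _ => mul_nonneg (hℓ i).le (hW0 _))
    linarith
  -- Step 3: no i with zhat ≤ C i < zstar
  have hno : ∀ i, zhat ≤ C i → zstar ≤ C i := by
    intro i hzi
    by_contra h
    push_neg at h
    have hub : sccf ℓ C c zhat ≤ ccf ℓ C (C i) := by
      rw [sccf, ccf, ← Finset.sum_filter_add_sum_filter_not Finset.univ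
        (fun j => C j ≤ C i) (fun j => ℓ j * rampW c (zhat - C j))]
      have h2 : ∑ j ∈ Finset.univ.filter (fun j => ¬ C j ≤ C i),
          ℓ j * rampW c (zhat - C j) = 0 := by
        apply Finset.sum_eq_zero
        intro j hj
        rw [Finset.mem_filter] at hj
        have hji : C i < C j := lt_of_not_ge hj.2
        have := hgap j i hji
        rw [hWzero _ (by linarith), mul_zero]
      rw [h2, add_zero]
      apply Finset.sum_le_sum
      intro j _
      calc ℓ j * rampW c (zhat - C j) ≤ ℓ j * 1 :=
            mul_le_mul_of_nonneg_left (hW1 _) (hℓ j).le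
        _ = ℓ j := mul_one _
    have := hopt.2 (C i) h
    linarith
  -- conclude
  have hkmem : k ∈ Finset.univ.filter (fun i : I => zhat ≤ C i) :=
    Finset.mem_filter.mpr ⟨Finset.mem_univ k, by rw [hk]; exact hle⟩
  refine ⟨⟨k, hkmem⟩, ?_⟩
  apply le_antisymm
  · apply Finset.le_inf'
    intro j hj
    exact hno j (Finset.mem_filter.mp hj).2
  · rw [← hk]
    exact Finset.inf'_le C hkmem
end

section
/- Let z* be an optimal threshold for P, and let A* ⊆ I be a minimizer of ∑_{i∈A} ℓ_i over all priority-based sets A ⊆ I satisfying ∑_{i∈A} ℓ_i ≥ P. Then the set S = {i ∈ I : C_i = z*} is nonempty and f(z*) − ∑_{i∈A*} ℓ_i ≤ ∑_{i∈S} ℓ_i − min_{i∈S} ℓ_i. -/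
/-- A set of loads `A` is priority-based if every load in `A` has criticality value
no larger than that of every load outside `A`. -/
def PriorityBased {I : Type*} (C : I → ℝ) (A : Finset I) : Prop :=
  ∀ i ∈ A, ∀ j ∉ A, C i ≤ C j

/-- Gap between the CCF value at the optimal threshold and the optimal
priority-based shed amount. -/
theorem ccf_gap_bound
    {I : Type*} [Fintype I] [Nonempty I] (ℓ C : I → ℝ)
    (hℓ : ∀ i, 0 < ℓ i) (hC : ∀ i, C i ∈ Set.Icc (0 : ℝ) 1)
    (P zstar : ℝ) (hopt : OptThresh ℓ C P zstar)
    (Astar : Finset I) (hApb : PriorityBased C Astar)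
    (hAfeas : P ≤ ∑ i ∈ Astar, ℓ i)
    (hAmin : ∀ A : Finset I, PriorityBased C A → P ≤ ∑ i ∈ A, ℓ i →
      ∑ i ∈ Astar, ℓ i ≤ ∑ i ∈ A, ℓ i) :
    ∃ hS : (Finset.univ.filter (fun i : I => C i = zstar)).Nonempty,
      ccf ℓ C zstar - ∑ i ∈ Astar, ℓ i ≤
        (∑ i ∈ Finset.univ.filter (fun i : I => C i = zstar), ℓ i)
          - (Finset.univ.filter (fun i : I => C i = zstar)).inf' hS ℓ := by
  classical
  set S := Finset.univ.filter (fun i : I => C i = zstar) with hSdef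
  set T := Finset.univ.filter (fun i : I => C i < zstar) with hTdef
  have hccf_nonneg : ∀ z : ℝ, 0 ≤ ccf ℓ C z := by
    intro z
    exact Finset.sum_nonneg fun i _ => (hℓ i).le
  -- S is nonempty
  have hSne : S.Nonempty := by
    by_contra h
    rw [Finset.not_nonempty_iff_eq_empty] at h
    have hlt : ∀ i : I, C i ≤ zstar → C i < zstar := by
      intro i hi
      rcases lt_or_eq_of_le hi with h' | h'
      · exact h'
      · exfalso
        have hmem : i ∈ S := by
          rw [hSdef]; exact Finset.mem_filter.mpr ⟨Finset.mem_univ i, h'⟩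
        rw [h] at hmem
        exact absurd hmem (Finset.notMem_empty i)
    rcases T.eq_empty_or_nonempty with hT | hT
    · have h0 : ccf ℓ C zstar ≤ 0 := by
        unfold ccf
        have he : Finset.univ.filter (fun i : I => C i ≤ zstar) = ∅ := by
          rw [Finset.filter_eq_empty_iff]
          intro i _ hle
          have hmem : i ∈ T := by
            rw [hTdef]; exact Finset.mem_filter.mpr ⟨Finset.mem_univ i, hlt i hle⟩
          rw [hT] at hmem
          exact absurd hmem (Finset.notMem_empty i)
        rw [he, Finset.sum_empty]
      have h1 := hopt.2 (zstar - 1) (by linarith)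
      have h2 := hccf_nonneg (zstar - 1)
      have h3 := hopt.1
      linarith
    · set z' := T.sup' hT C with hz'
      have hz'lt : z' < zstar := by
        apply Finset.sup'_lt_iff hT |>.mpr
        intro i hi
        exact (Finset.mem_filter.mp hi).2
      have hsub : Finset.univ.filter (fun i : I => C i ≤ zstar) ⊆
          Finset.univ.filter (fun i : I => C i ≤ z') := by
        intro i hi
        have hle := (Finset.mem_filter.mp hi).2
        refine Finset.mem_filter.mpr ⟨Finset.mem_univ i, ?_⟩
        exact Finset.le_sup' C (Finset.mem_filter.mpr ⟨Finset.mem_univ i, hlt i hle⟩)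
      have hle : ccf ℓ C zstar ≤ ccf ℓ C z' :=
        Finset.sum_le_sum_of_subset_of_nonneg hsub (fun i _ _ => (hℓ i).le)
      have := hopt.2 z' hz'lt
      have := hopt.1
      linarith
  -- T ⊆ Astar
  have hTsub : T ⊆ Astar := by
    intro j hj
    have hjlt : C j < zstar := (Finset.mem_filter.mp hj).2
    by_contra hjA
    have hAsub : Astar ⊆ Finset.univ.filter (fun i : I => C i ≤ C j) := by
      intro i hi
      exact Finset.mem_filter.mpr ⟨Finset.mem_univ i, hApb i hi j hjA⟩
    have hle : (∑ i ∈ Astar, ℓ i) ≤ ccf ℓ C (C j) :=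
      Finset.sum_le_sum_of_subset_of_nonneg hAsub (fun i _ _ => (hℓ i).le)
    have := hopt.2 (C j) hjlt
    linarith
  -- there is s ∈ Astar with C s = zstar
  have hs : ∃ s ∈ Astar, C s = zstar := by
    by_contra h
    push_neg at h
    obtain ⟨s0, hs0⟩ := hSne
    have hs0z : C s0 = zstar := (Finset.mem_filter.mp hs0).2
    have hs0A : s0 ∉ Astar := fun hmem => h s0 hmem hs0z
    have hAT : Astar ⊆ T := by
      intro i hi
      refine Finset.mem_filter.mpr ⟨Finset.mem_univ i, ?_⟩
      have h1 : C i ≤ C s0 := hApb i hi s0 hs0A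
      rw [hs0z] at h1
      exact lt_of_le_of_ne h1 (h i hi)
    rcases Astar.eq_empty_or_nonempty with hA | hA
    · have h0 : (∑ i ∈ Astar, ℓ i) = 0 := by rw [hA, Finset.sum_empty]
      have h1 := hopt.2 (zstar - 1) (by linarith)
      have h2 := hccf_nonneg (zstar - 1)
      linarith
    · have hT : T.Nonempty := hA.mono hAT
      set z' := T.sup' hT C with hz'
      have hz'lt : z' < zstar := by
        apply Finset.sup'_lt_iff hT |>.mpr
        intro i hi
        exact (Finset.mem_filter.mp hi).2
      have hsub : Astar ⊆ Finset.univ.filter (fun i : I => C i ≤ z') := by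
        intro i hi
        exact Finset.mem_filter.mpr ⟨Finset.mem_univ i, Finset.le_sup' C (hAT hi)⟩
      have hle : (∑ i ∈ Astar, ℓ i) ≤ ccf ℓ C z' :=
        Finset.sum_le_sum_of_subset_of_nonneg hsub (fun i _ _ => (hℓ i).le)
      have := hopt.2 z' hz'lt
      linarith
  obtain ⟨s, hsA, hsz⟩ := hs
  refine ⟨hSne, ?_⟩
  have hsS : s ∈ S := by
    rw [hSdef]; exact Finset.mem_filter.mpr ⟨Finset.mem_univ s, hsz⟩
  have hsT : s ∉ T := by
    intro hmem
    have := (Finset.mem_filter.mp hmem).2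
    rw [hsz] at this
    exact lt_irrefl _ this
  -- split ccf zstar = ∑ T + ∑ S
  have hsplit : ccf ℓ C zstar = (∑ i ∈ T, ℓ i) + (∑ i ∈ S, ℓ i) := by
    unfold ccf
    have hun : Finset.univ.filter (fun i : I => C i ≤ zstar) = T ∪ S := by
      ext i
      simp only [hTdef, hSdef, Finset.mem_union, Finset.mem_filter, Finset.mem_univ,
        true_and]
      constructor
      · intro hle; exact lt_or_eq_of_le hle
      · rintro (h | h)
        · exact h.le
        · exact h.le
    rw [hun, Finset.sum_union]
    rw [Finset.disjoint_left]
    intro i hiT hiS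
    have h1 := (Finset.mem_filter.mp hiT).2
    have h2 := (Finset.mem_filter.mp hiS).2
    rw [h2] at h1
    exact lt_irrefl _ h1
  -- insert s T ⊆ Astar
  have hins : insert s T ⊆ Astar := by
    intro i hi
    rcases Finset.mem_insert.mp hi with h | h
    · rw [h]; exact hsA
    · exact hTsub h
  have hlow : (∑ i ∈ T, ℓ i) + ℓ s ≤ ∑ i ∈ Astar, ℓ i := by
    have hsum : ∑ i ∈ insert s T, ℓ i = ℓ s + ∑ i ∈ T, ℓ i :=
      Finset.sum_insert hsT
    have := Finset.sum_le_sum_of_subset_of_nonneg hins (fun i _ _ => (hℓ i).le)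
    rw [hsum] at this
    linarith
  have hinf : S.inf' hSne ℓ ≤ ℓ s := Finset.inf'_le ℓ hsS
  linarith
end
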